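/- arXiv:1611.06861 — 15 statements merged into one kernel-verified Lean document; each statement's English description precedes it below -/
import Mathlib

section
/- If f: S → ℂ satisfies the Kannappan-type equation f(xyz₀) + μ(y)f(xτ(y)z₀) = 2f(x)f(y) for all x,y ∈ S, then f(x) = μ(x)f(τ(x)) for all x ∈ S. -/
/-! Substituting `τ y` for `y` in the equation and multiplying by `μ y` gives the same left-hand
side, because `μ y * μ (τ y) = 1` and `τ (τ y) = y`. Comparing right-hand sides yields
`2 f(x) (f(y) - μ(y) f(τ(y))) = 0`, so either `f` vanishes identically or `f = μ · (f ∘ τ)`. -/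

section Kannappan

variable {S K : Type*} [Mul S] (τ : S → S) (μ : S → K) (z₀ : S) (f : S → K)

theorem two_mul_mul_sub_eq_zero_of_kannappan [CommRing K] (hτ : Function.Involutive τ)
    (hμτ : ∀ y, μ y * μ (τ y) = 1)
    (hf : ∀ x y, f (x * y * z₀) + μ y * f (x * τ y * z₀) = 2 * f x * f y) (x y : S) :
    2 * f x * (f y - μ y * f (τ y)) = 0 := by
  have hfτ := hf x (τ y)
  rw [hτ y] at hfτ
  linear_combination μ y * hfτ - hf x y - f (x * y * z₀) * hμτ y

theorem eq_mul_comp_of_kannappan [Field K] [NeZero (2 : K)] (hτ : Function.Involutive τ)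
    (hμτ : ∀ y, μ y * μ (τ y) = 1)
    (hf : ∀ x y, f (x * y * z₀) + μ y * f (x * τ y * z₀) = 2 * f x * f y) (y : S) :
    f y = μ y * f (τ y) := by
  by_cases hzero : ∀ x, f x = 0
  · simp [hzero]
  obtain ⟨x, hx⟩ := not_forall.mp hzero
  have h := two_mul_mul_sub_eq_zero_of_kannappan τ μ z₀ f hτ hμτ hf x y
  exact sub_eq_zero.mp <| (mul_eq_zero.mp h).resolve_left (mul_ne_zero two_ne_zero hx)

end Kannappan

theorem stmt_0_general {S : Type*} [Semigroup S] (τ : S → S)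
    (hτinv : ∀ x, τ (τ x) = x)
    (μ : S → ℂ) (hμ : ∀ x y, μ (x * y) = μ x * μ y)
    (hμτ : ∀ x, μ (x * τ x) = 1)
    (z₀ : S)
    (f : S → ℂ) (hf : ∀ x y, f (x * y * z₀) + μ y * f (x * τ y * z₀) = 2 * f x * f y) :
    ∀ x, f x = μ x * f (τ x) :=
  eq_mul_comp_of_kannappan τ μ z₀ f hτinv (fun y => hμ y (τ y) ▸ hμτ y) hf

theorem stmt_0 {S : Type*} [Semigroup S] (τ : S → S)
    (hτinv : ∀ x, τ (τ x) = x)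
    (hτ : (∀ x y, τ (x * y) = τ x * τ y) ∨ (∀ x y, τ (x * y) = τ y * τ x))
    (μ : S → ℂ) (hμ : ∀ x y, μ (x * y) = μ x * μ y)
    (hμτ : ∀ x, μ (x * τ x) = 1)
    (z₀ : S) (hz₀ : ∀ x, z₀ * x = x * z₀)
    (f : S → ℂ) (hf : ∀ x y, f (x * y * z₀) + μ y * f (x * τ y * z₀) = 2 * f x * f y) :
    ∀ x, f x = μ x * f (τ x) :=
  stmt_0_general τ hτinv μ hμ hμτ z₀ f hf
end

section
/- If f: S → ℂ satisfies f(xyz₀) + μ(y)f(xτ(y)z₀) = 2f(x)f(y) for all x,y ∈ S, then f(xτ(z₀)z₀) = μ(τ(z₀))f(z₀)f(x) for all x ∈ S. -/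
/-!
Comparing the equation at `(x, y)` with `μ y` times the equation at `(x, τ y)` shows
`μ y * f (τ y) = f y` as soon as `f ≠ 0`. The element `u = τ z₀ * z₀` is central, fixed by `τ`
and has `μ u = 1`; the equation at `(τ z₀, w)`, combined with that symmetry at `w * u`,
then gives `f (w * u) = f (τ z₀) * f w`, and `f (τ z₀) = μ (τ z₀) * f z₀`.
-/

section

variable {S : Type*} [Semigroup S] {τ : S → S}

theorem comm_map_of_comm (hτinv : ∀ x, τ (τ x) = x)
    (hτ : (∀ x y, τ (x * y) = τ x * τ y) ∨ (∀ x y, τ (x * y) = τ y * τ x))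
    {z : S} (hz : ∀ x, z * x = x * z) (x : S) : τ z * x = x * τ z := by
  rcases hτ with h | h
  · calc τ z * x = τ (z * τ x) := by rw [h, hτinv]
      _ = τ (τ x * z) := by rw [hz]
      _ = x * τ z := by rw [h, hτinv]
  · calc τ z * x = τ (τ x * z) := by rw [h, hτinv]
      _ = τ (z * τ x) := by rw [hz]
      _ = x * τ z := by rw [h, hτinv]

theorem map_mul_of_comm (hτ : (∀ x y, τ (x * y) = τ x * τ y) ∨ (∀ x y, τ (x * y) = τ y * τ x))
    {u : S} (hu : ∀ x, τ u * x = x * τ u) (w : S) : τ (w * u) = τ w * τ u := by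
  rcases hτ with h | h
  · exact h w u
  · rw [h, hu]

variable {μ : S → ℂ} {f : S → ℂ} {z₀ : S}

theorem mul_apply_map_eq_apply (hτinv : ∀ x, τ (τ x) = x)
    (hμ : ∀ x y, μ (x * y) = μ x * μ y) (hμτ : ∀ x, μ (x * τ x) = 1)
    (hf : ∀ x y, f (x * y * z₀) + μ y * f (x * τ y * z₀) = 2 * f x * f y)
    {x : S} (hx : f x ≠ 0) (y : S) : μ y * f (τ y) = f y := by
  have hy := hf x y
  have hτy := hf x (τ y)
  rw [hτinv] at hτy
  have hunit : μ y * μ (τ y) = 1 := by rw [← hμ, hμτ]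
  have h : 2 * f x * (f y - μ y * f (τ y)) = 0 := by
    linear_combination μ y * hτy - hy - f (x * y * z₀) * hunit
  simpa [hx, sub_eq_zero, eq_comm] using h

theorem apply_mul_map_mul_eq (hτinv : ∀ x, τ (τ x) = x)
    (hτ : (∀ x y, τ (x * y) = τ x * τ y) ∨ (∀ x y, τ (x * y) = τ y * τ x))
    (hμ : ∀ x y, μ (x * y) = μ x * μ y) (hμτ : ∀ x, μ (x * τ x) = 1)
    (hz₀ : ∀ x, z₀ * x = x * z₀)
    (hf : ∀ x y, f (x * y * z₀) + μ y * f (x * τ y * z₀) = 2 * f x * f y)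
    {x : S} (hx : f x ≠ 0) (w : S) : f (w * (τ z₀ * z₀)) = f (τ z₀) * f w := by
  have hτz₀ := comm_map_of_comm hτinv hτ hz₀
  have hτu_comm : ∀ s, τ (τ z₀ * z₀) * s = s * τ (τ z₀ * z₀) := by
    refine comm_map_of_comm hτinv hτ fun s ↦ ?_
    rw [mul_assoc, hz₀, ← mul_assoc, hτz₀, mul_assoc]
  have hτu : τ (τ z₀ * z₀) = τ z₀ * z₀ := by
    rcases hτ with h | h
    · rw [h, hτinv, hz₀]
    · rw [h, hτinv]
  have hμu : μ (τ z₀ * z₀) = 1 := by rw [← hz₀, hμτ]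
  have hsym := mul_apply_map_eq_apply hτinv hμ hμτ hf hx (w * (τ z₀ * z₀))
  rw [map_mul_of_comm hτ hτu_comm w, hτu, hμ, hμu, mul_one] at hsym
  have hw := hf (τ z₀) w
  rw [hτz₀ w, hτz₀ (τ w), mul_assoc w, mul_assoc (τ w)] at hw
  linear_combination (hw - hsym) / 2

end

theorem stmt_1 {S : Type*} [Semigroup S] (τ : S → S)
    (hτinv : ∀ x, τ (τ x) = x)
    (hτ : (∀ x y, τ (x * y) = τ x * τ y) ∨ (∀ x y, τ (x * y) = τ y * τ x))
    (μ : S → ℂ) (hμ : ∀ x y, μ (x * y) = μ x * μ y)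
    (hμτ : ∀ x, μ (x * τ x) = 1)
    (z₀ : S) (hz₀ : ∀ x, z₀ * x = x * z₀)
    (f : S → ℂ) (hf : ∀ x y, f (x * y * z₀) + μ y * f (x * τ y * z₀) = 2 * f x * f y) :
    ∀ x, f (x * τ z₀ * z₀) = μ (τ z₀) * f z₀ * f x := by
  intro x
  by_cases hzero : ∀ w, f w = 0
  · simp [hzero]
  obtain ⟨w, hw⟩ := not_forall.mp hzero
  rw [mul_assoc, apply_mul_map_mul_eq hτinv hτ hμ hμτ hz₀ hf hw,
    ← mul_apply_map_eq_apply hτinv hμ hμτ hf hw (τ z₀), hτinv]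
end

section
/- If f: S → ℂ satisfies f(xyz₀) + μ(y)f(xτ(y)z₀) = 2f(x)f(y) for all x,y ∈ S, then f(z₀) ≠ 0 if and only if f is not identically zero. -/
/-!
Suppose `f z₀ = 0`. Adding the equation at `(x * z₀, y)` to the one at `(x, y * z₀)`, and
cancelling the `τ`-terms with the equation at `(x * τ y, z₀)`, gives a shifted sine addition law
`f (x y z₀²) = f x f (y z₀) + f (x z₀) f y`. Expanding `f (x y z₀³)` in two ways shows that
`x ↦ f (x z₀²)` is proportional to `f`, and evaluating at powers of `z₀` forces `f (x z₀) = 0` for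
all `x`. The equation at `(x, x)` then reads `2 f(x)² = 0`.
-/

section SineAddition

variable {S R : Type*} [Semigroup S] [CommRing R] {z : S} {f : S → R}

lemma mul_right_comm_of_central (hz : ∀ x, z * x = x * z) (x y : S) : x * z * y = x * y * z := by
  rw [mul_assoc, hz, mul_assoc]

/-- The sine addition law `g (x y) = f x g y + g x f y` for `g x = f (x z)`, shifted by `z`. -/
def IsSineAddition (f : S → R) (z : S) : Prop :=
  ∀ x y, f (x * y * z * z) = f x * f (y * z) + f (x * z) * f y

namespace IsSineAddition

lemma apply_mul_apply_symm (hz : ∀ x, z * x = x * z) (hK : IsSineAddition f z) (x y : S) :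
    f x * f (y * z * z) = f (x * z * z) * f y := by
  have hx_yz := hK x (y * z)
  have hzx_y := hK (z * x) y
  rw [← mul_assoc x y z] at hx_yz
  rw [hz x, mul_right_comm_of_central hz x y, mul_right_comm_of_central hz (x * y)] at hzx_y
  linear_combination hzx_y - hx_yz

variable [NoZeroDivisors R]

lemma apply_sq_eq_zero (hz : ∀ x, z * x = x * z) (hK : IsSineAddition f z) (hfz : f z = 0)
    {a : S} (ha : f a ≠ 0) : f (z * z) = 0 := by
  have hsym := hK.apply_mul_apply_symm hz
  have h3 : f (z * z * z) = 0 := by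
    have := hsym z a
    rw [hfz, zero_mul] at this
    exact (mul_eq_zero.mp this.symm).resolve_right ha
  have h5 : f (z * z * z * z * z) = 0 := by
    have := hsym a (z * z * z)
    rw [h3, mul_zero] at this
    exact (mul_eq_zero.mp this).resolve_left ha
  have hcube : f (z * z * z * z * z) = f (z * z) * f (z * z) := by
    simpa [hfz] using hK (z * z) z
  exact mul_self_eq_zero.mp (hcube.symm.trans h5)

lemma apply_mul_eq_zero (hz : ∀ x, z * x = x * z) (hK : IsSineAddition f z) (hfz : f z = 0)
    (x : S) : f (x * z) = 0 := by
  by_cases hf : ∀ a, f a = 0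
  · exact hf _
  obtain ⟨a, ha⟩ := not_forall.mp hf
  have hsym := hK.apply_mul_apply_symm hz
  have hcube : ∀ y, f (y * z * z * z) = 0 := fun y => by
    simpa [hfz, hK.apply_sq_eq_zero hz hfz ha] using hK y z
  by_cases hka : f (a * z * z) = 0
  · have hk : f (x * z * z) = 0 := by
      have := hsym x a
      rw [hka, mul_zero] at this
      exact (mul_eq_zero.mp this.symm).resolve_right ha
    have hxx := hK x (x * z)
    rw [← mul_assoc, hcube, hk, mul_zero, zero_add] at hxx
    exact mul_self_eq_zero.mp hxx.symm
  · have := hsym a (x * z)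
    rw [hcube, mul_zero] at this
    exact (mul_eq_zero.mp this.symm).resolve_left hka

end IsSineAddition

end SineAddition

lemma apply_mul_of_central {S : Type*} [Semigroup S] {τ : S → S}
    (hτ : (∀ x y, τ (x * y) = τ x * τ y) ∨ (∀ x y, τ (x * y) = τ y * τ x))
    {z : S} (hz : ∀ x, z * x = x * z) (y : S) : τ (y * z) = τ y * τ z := by
  rcases hτ with hmul | hmul
  · exact hmul y z
  · rw [← hz, hmul]

lemma isSineAddition_of_apply_eq_zero {S R : Type*} [Semigroup S] [CommRing R]
    [NoZeroDivisors R] [NeZero (2 : R)] {τ : S → S} {μ : S → R} {z : S} {f : S → R}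
    (hτ : ∀ y, τ (y * z) = τ y * τ z) (hμ : ∀ x y, μ (x * y) = μ x * μ y)
    (hz : ∀ x, z * x = x * z)
    (hf : ∀ x y, f (x * y * z) + μ y * f (x * τ y * z) = 2 * f x * f y) (hfz : f z = 0) :
    IsSineAddition f z := by
  intro x y
  have hxτy_z := hf (x * τ y) z
  have hx_yz := hf x (y * z)
  have hxz_y := hf (x * z) y
  rw [hfz, mul_zero] at hxτy_z
  rw [← mul_assoc, hμ, hτ, ← mul_assoc] at hx_yz
  rw [mul_right_comm_of_central hz x y, mul_right_comm_of_central hz x (τ y)] at hxz_y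
  refine mul_left_cancel₀ (two_ne_zero (α := R)) ?_
  linear_combination hx_yz + hxz_y - μ y * hxτy_z

theorem stmt_3_general {S : Type*} [Semigroup S] (τ : S → S)
    (hτ : (∀ x y, τ (x * y) = τ x * τ y) ∨ (∀ x y, τ (x * y) = τ y * τ x))
    (μ : S → ℂ) (hμ : ∀ x y, μ (x * y) = μ x * μ y)
    (z₀ : S) (hz₀ : ∀ x, z₀ * x = x * z₀)
    (f : S → ℂ) (hf : ∀ x y, f (x * y * z₀) + μ y * f (x * τ y * z₀) = 2 * f x * f y) :
    f z₀ ≠ 0 ↔ f ≠ 0 := by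
  refine ⟨fun hfz hf0 => hfz (by simp [hf0]), fun hf0 hfz => hf0 (funext fun x => ?_)⟩
  have hK := isSineAddition_of_apply_eq_zero (apply_mul_of_central hτ hz₀) hμ hz₀ hf hfz
  have hxx := hf x x
  rw [hK.apply_mul_eq_zero hz₀ hfz, hK.apply_mul_eq_zero hz₀ hfz, mul_zero, add_zero] at hxx
  simpa using hxx

theorem stmt_3 {S : Type*} [Semigroup S] (τ : S → S)
    (hτinv : ∀ x, τ (τ x) = x)
    (hτ : (∀ x y, τ (x * y) = τ x * τ y) ∨ (∀ x y, τ (x * y) = τ y * τ x))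
    (μ : S → ℂ) (hμ : ∀ x y, μ (x * y) = μ x * μ y)
    (hμτ : ∀ x, μ (x * τ x) = 1)
    (z₀ : S) (hz₀ : ∀ x, z₀ * x = x * z₀)
    (f : S → ℂ) (hf : ∀ x y, f (x * y * z₀) + μ y * f (x * τ y * z₀) = 2 * f x * f y) :
    f z₀ ≠ 0 ↔ f ≠ 0 :=
  stmt_3_general τ hτ μ hμ z₀ hz₀ f hf
end

section
/- If g: S → ℂ satisfies the μ-d'Alembert equation g(xy) + μ(y)g(xτ(y)) = 2g(x)g(y) with g(z₀) ≠ 0 and g(xz₀) = g(z₀)g(x) for all x ∈ S, then f := g(z₀)·g is a nonzero solution of f(xyz₀) + μ(y)f(xτ(y)z₀) = 2f(x)f(y). -/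
theorem stmt_4_general {S : Type*} [Semigroup S] (τ : S → S) (μ : S → ℂ) (z₀ : S) (g : S → ℂ)
    (hg : ∀ x y, g (x * y) + μ y * g (x * τ y) = 2 * g x * g y)
    (hgz : g z₀ ≠ 0) (hgz2 : ∀ x, g (x * z₀) = g z₀ * g x) :
    (fun x => g z₀ * g x) ≠ 0 ∧
    ∀ x y, (fun x => g z₀ * g x) (x * y * z₀) + μ y * (fun x => g z₀ * g x) (x * τ y * z₀) =
      2 * (fun x => g z₀ * g x) x * (fun x => g z₀ * g x) y := by
  refine ⟨fun hf => hgz ?_, fun x y => ?_⟩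
  · simpa using congrFun hf z₀
  · simp only [hgz2]
    linear_combination g z₀ ^ 2 * hg x y

theorem stmt_4 {S : Type*} [Semigroup S] (τ : S → S)
    (hτinv : ∀ x, τ (τ x) = x)
    (hτ : (∀ x y, τ (x * y) = τ x * τ y) ∨ (∀ x y, τ (x * y) = τ y * τ x))
    (μ : S → ℂ) (hμ : ∀ x y, μ (x * y) = μ x * μ y)
    (hμτ : ∀ x, μ (x * τ x) = 1)
    (z₀ : S) (hz₀ : ∀ x, z₀ * x = x * z₀)
    (g : S → ℂ)
    (hg : ∀ x y, g (x * y) + μ y * g (x * τ y) = 2 * g x * g y)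
    (hgz : g z₀ ≠ 0) (hgz2 : ∀ x, g (x * z₀) = g z₀ * g x) :
    (fun x => g z₀ * g x) ≠ 0 ∧
    ∀ x y, (fun x => g z₀ * g x) (x * y * z₀) + μ y * (fun x => g z₀ * g x) (x * τ y * z₀) =
      2 * (fun x => g z₀ * g x) x * (fun x => g z₀ * g x) y :=
  stmt_4_general τ μ z₀ g hg hgz hgz2
end

section
/- If f: S → ℂ is a nonzero solution of f(xyz₀) + μ(y)f(xτ(y)z₀) = 2f(x)f(y), then the function g(x) := f(xz₀)/f(z₀) satisfies the μ-d'Alembert equation g(xy) + μ(y)g(xτ(y)) = 2g(x)g(y), satisfies g(xz₀) = g(z₀)g(x) for all x, has g(z₀) ≠ 0, and f = g(z₀)·g. -/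
/-!
Everything reduces to the determinant identity `f x * f (y * z₀) = f y * f (x * z₀)`: it makes
`f (x * z₀) = L * f x` for a constant `L`, the equation at `(x₀, z₀)` together with
`μ y * f (τ y) = f y` gives `L ^ 2 = f z₀`, nondegeneracy gives `L ≠ 0`, and `g = f / L`.

When `τ` is an anti-homomorphism, `f (x * y * z₀ * z₀) - f (y * x * z₀ * z₀)` is computed twice,
from the equation at `(x * z₀, y)` and at `(x, y * z₀)`; the results are opposite multiples of the
determinant. When `τ` is a homomorphism, these instances combine instead into
`f (x * z₀) * ψ y = 2 * f z₀ * f x * f y` with `ψ y = f (y * z₀) + μ y * f (τ y * z₀)`, which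
gives the identity once `f z₀ ≠ 0`; if `f z₀ = 0`, then `ψ = 0` and
`f (x * y * z₀ * z₀) = f x * f (y * z₀) + f (x * z₀) * f y`, which forces `f (· * z₀) = 0`,
hence `f = 0`.
-/

section

variable {S : Type*} [Semigroup S] {τ : S → S} {μ : S → ℂ} {z₀ : S} {f : S → ℂ}

def KannappanDAlembertEq (τ : S → S) (μ : S → ℂ) (z₀ : S) (f : S → ℂ) : Prop :=
  ∀ x y, f (x * y * z₀) + μ y * f (x * τ y * z₀) = 2 * f x * f y

theorem mul_mul_right_comm_of_forall_commute (hz₀ : ∀ x, z₀ * x = x * z₀) (a b : S) :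
    a * z₀ * b = a * b * z₀ := by
  rw [mul_assoc, hz₀ b, ← mul_assoc]

namespace KannappanDAlembertEq

theorem eq_zero_of_forall_apply_mul_eq_zero (hf : KannappanDAlembertEq τ μ z₀ f)
    (h : ∀ u, f (u * z₀) = 0) : f = 0 := by
  funext x
  have e := hf x x
  rw [h, h] at e
  exact mul_self_eq_zero.mp (by linear_combination -e / 2)

theorem exists_apply_mul_ne_zero (hf : KannappanDAlembertEq τ μ z₀ f) (hf0 : f ≠ 0) :
    ∃ u, f (u * z₀) ≠ 0 := by
  by_contra! h
  exact hf0 (hf.eq_zero_of_forall_apply_mul_eq_zero h)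

theorem mu_mul_apply_tau (hf : KannappanDAlembertEq τ μ z₀ f) (hτinv : ∀ x, τ (τ x) = x)
    (hμτ : ∀ x, μ x * μ (τ x) = 1) (hf0 : f ≠ 0) (y : S) : μ y * f (τ y) = f y := by
  obtain ⟨x₀, hx₀⟩ : ∃ x, f x ≠ 0 := Function.ne_iff.mp hf0
  have e₁ := hf x₀ y
  have e₂ := hf x₀ (τ y)
  rw [hτinv] at e₂
  refine mul_left_cancel₀ hx₀ ?_
  linear_combination (e₁ - μ y * e₂ + f (x₀ * y * z₀) * hμτ y) / 2

theorem apply_mul_mul_z₀ (hf : KannappanDAlembertEq τ μ z₀ f) (hz₀ : ∀ x, z₀ * x = x * z₀)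
    (x y : S) : f (x * y * z₀ * z₀) + μ y * f (x * τ y * z₀ * z₀) = 2 * f (x * z₀) * f y := by
  simpa only [mul_mul_right_comm_of_forall_commute hz₀] using hf (x * z₀) y

theorem apply_mul_tau_z₀_mul_z₀ (hf : KannappanDAlembertEq τ μ z₀ f) (hτinv : ∀ x, τ (τ x) = x)
    (hμτ : ∀ x, μ x * μ (τ x) = 1) (hf0 : f ≠ 0) (u : S) :
    μ z₀ * f (u * (τ z₀ * z₀)) + f (u * z₀ * z₀) = 2 * f z₀ * f u := by
  have e := hf u (τ z₀)
  rw [hτinv, mul_assoc u (τ z₀) z₀] at e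
  linear_combination μ z₀ * e - f (u * z₀ * z₀) * hμτ z₀ +
    2 * f u * hf.mu_mul_apply_tau hτinv hμτ hf0 z₀

section Hom

variable (hf : KannappanDAlembertEq τ μ z₀ f) (hτinv : ∀ x, τ (τ x) = x)
  (hhom : ∀ x y, τ (x * y) = τ x * τ y) (hμ : ∀ x y, μ (x * y) = μ x * μ y)
  (hμτ : ∀ x, μ x * μ (τ x) = 1) (hz₀ : ∀ x, z₀ * x = x * z₀) (hf0 : f ≠ 0)

include hf hτinv hhom hμ hμτ hz₀ hf0

theorem apply_mul_mul_z₀_add_of_hom (x y : S) :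
    f (x * y * z₀ * z₀) + μ y * f z₀ * f (x * τ y) = f x * f (y * z₀) + f (x * z₀) * f y := by
  have e := hf x (y * z₀)
  rw [hhom, ← mul_assoc x y z₀, ← mul_assoc x (τ y) (τ z₀), mul_assoc (x * τ y) (τ z₀) z₀,
    hμ] at e
  linear_combination (e - μ y * hf.apply_mul_tau_z₀_mul_z₀ hτinv hμτ hf0 (x * τ y) +
    hf.apply_mul_mul_z₀ hz₀ x y) / 2

theorem apply_mul_z₀_mul_of_hom (x y : S) :
    f (x * z₀) * (f (y * z₀) + μ y * f (τ y * z₀)) = 2 * f z₀ * f x * f y := by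
  have h₁ := apply_mul_mul_z₀_add_of_hom hf hτinv hhom hμ hμτ hz₀ hf0 (x * z₀) y
  have h₂ := apply_mul_mul_z₀_add_of_hom hf hτinv hhom hμ hμτ hz₀ hf0 (x * z₀) (τ y)
  have h₃ := hf.apply_mul_mul_z₀ hz₀ (x * z₀) y
  rw [hτinv] at h₂
  simp only [mul_mul_right_comm_of_forall_commute hz₀] at h₁ h₂ h₃
  linear_combination h₃ - h₁ - μ y * h₂ - f (x * z₀ * z₀) * hf.mu_mul_apply_tau hτinv hμτ hf0 y +
    f z₀ * f (x * y * z₀) * hμτ y + f z₀ * hf x y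

theorem apply_z₀_ne_zero_of_hom : f z₀ ≠ 0 := by
  intro hfz
  obtain ⟨u, hu⟩ := hf.exists_apply_mul_ne_zero hf0
  obtain ⟨x₀, hx₀⟩ : ∃ x, f x ≠ 0 := Function.ne_iff.mp hf0
  have hA := hf.mu_mul_apply_tau hτinv hμτ hf0
  have hψ (y : S) : f (y * z₀) + μ y * f (τ y * z₀) = 0 := by
    have e := apply_mul_z₀_mul_of_hom hf hτinv hhom hμ hμτ hz₀ hf0 u y
    rw [hfz, mul_zero, zero_mul, zero_mul] at e
    exact (mul_eq_zero.mp e).resolve_left hu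
  have hW (x y : S) : f (x * y * z₀ * z₀) = f x * f (y * z₀) + f (x * z₀) * f y := by
    linear_combination apply_mul_mul_z₀_add_of_hom hf hτinv hhom hμ hμτ hz₀ hf0 x y -
      μ y * f (x * τ y) * hfz
  have hsep (x y : S) : f (x * z₀ * z₀) * f y = f x * f (y * z₀ * z₀) := by
    have e₁ := hW x (y * z₀)
    have e₂ := hW (x * z₀) y
    rw [← mul_assoc x y z₀] at e₁
    rw [mul_mul_right_comm_of_forall_commute hz₀ x y] at e₂
    linear_combination e₁ - e₂
  have hcross (x : S) : f x * f (z₀ * z₀) * f x₀ = f (x * z₀) * f (x₀ * z₀ * z₀) := by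
    linear_combination hsep (x * z₀) x₀ - f x₀ * hW x z₀ - f x₀ * f (x * z₀) * hfz
  have hzz : f (z₀ * z₀) = 0 := by
    have e : 2 * f x₀ * f (z₀ * z₀) * f x₀ = 0 := by
      linear_combination hcross x₀ + μ x₀ * hcross (τ x₀) + f (x₀ * z₀ * z₀) * hψ x₀ -
        f (z₀ * z₀) * f x₀ * hA x₀
    simpa [hx₀] using e
  have hk₀ : f (x₀ * z₀ * z₀) = 0 := by
    simpa [hzz, hu] using (hcross u).symm
  have hk (x : S) : f (x * z₀ * z₀) = 0 := by
    simpa [hk₀, hx₀] using hsep x x₀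
  have hx₀z₀ : f (x₀ * z₀) = 0 := by
    have e : 2 * f x₀ * f (x₀ * z₀) = 0 := by linear_combination -hW x₀ x₀ + hk (x₀ * x₀)
    simpa [hx₀] using e
  have e : f (u * z₀) * f x₀ = 0 := by linear_combination -hW u x₀ + hk (u * x₀) - f u * hx₀z₀
  exact mul_ne_zero hu hx₀ e

theorem apply_mul_apply_mul_z₀_comm_of_hom (x y : S) : f x * f (y * z₀) = f y * f (x * z₀) := by
  obtain ⟨x₀, hx₀⟩ : ∃ x, f x ≠ 0 := Function.ne_iff.mp hf0
  have H := apply_mul_z₀_mul_of_hom hf hτinv hhom hμ hμτ hz₀ hf0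
  have hfz := apply_z₀_ne_zero_of_hom hf hτinv hhom hμ hμτ hz₀ hf0
  have hψ : f (x₀ * z₀) + μ x₀ * f (τ x₀ * z₀) ≠ 0 := by
    refine right_ne_zero_of_mul (a := f (x₀ * z₀)) ?_
    simp [H, hfz, hx₀]
  refine mul_right_cancel₀ hψ ?_
  linear_combination f x * H y x₀ - f y * H x x₀

end Hom

section Anti

variable (hf : KannappanDAlembertEq τ μ z₀ f) (hτinv : ∀ x, τ (τ x) = x)
  (hanti : ∀ x y, τ (x * y) = τ y * τ x) (hμ : ∀ x y, μ (x * y) = μ x * μ y)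
  (hμτ : ∀ x, μ x * μ (τ x) = 1) (hz₀ : ∀ x, z₀ * x = x * z₀) (hf0 : f ≠ 0)

include hf hτinv hanti hμ hμτ hz₀ hf0

theorem apply_mul_z₀_mul_z₀_of_anti (u : S) :
    f (u * z₀ * z₀) = μ u * f (τ u * z₀ * z₀) := by
  have hA := hf.mu_mul_apply_tau hτinv hμτ hf0
  have hβ := hf.apply_mul_tau_z₀_mul_z₀ hτinv hμτ hf0
  have e := hA (z₀ * u * τ z₀)
  have hτ : τ (z₀ * u * τ z₀) = τ u * (τ z₀ * z₀) := by
    rw [hanti, hτinv, hanti, hz₀, mul_assoc]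
  have harg : z₀ * u * τ z₀ = u * (τ z₀ * z₀) := by
    rw [hz₀ u, mul_assoc, hz₀ (τ z₀)]
  rw [hτ, hμ, hμ, harg] at e
  linear_combination hβ u - μ u * hβ (τ u) + μ z₀ * e - 2 * f z₀ * hA u -
    μ z₀ * μ u * f (τ u * (τ z₀ * z₀)) * hμτ z₀

theorem apply_mul_mul_z₀_mul_z₀_sub_swap_of_anti (x y : S) :
    f (x * y * z₀ * z₀) - f (y * x * z₀ * z₀) = 2 * (f (x * z₀) * f y - f (y * z₀) * f x) := by
  have e := apply_mul_z₀_mul_z₀_of_anti hf hτinv hanti hμ hμτ hz₀ hf0 (x * τ y)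
  rw [hanti, hτinv, hμ] at e
  linear_combination hf.apply_mul_mul_z₀ hz₀ x y - hf.apply_mul_mul_z₀ hz₀ y x - μ y * e -
    μ x * f (y * τ x * z₀ * z₀) * hμτ y

theorem apply_mul_mul_z₀_mul_z₀_sub_swap_of_anti' (x y : S) :
    f (x * y * z₀ * z₀) - f (y * x * z₀ * z₀) = 2 * (f x * f (y * z₀) - f y * f (x * z₀)) := by
  have hswap (a b : S) : a * (τ z₀ * τ b) * z₀ = a * (τ z₀ * z₀) * τ b := by
    rw [← mul_assoc, ← mul_mul_right_comm_of_forall_commute hz₀ (a * τ z₀), mul_assoc a]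
  have e (a b : S) :
      f (a * b * z₀ * z₀) + μ b * μ z₀ * f (a * (τ z₀ * z₀) * τ b) = 2 * f a * f (b * z₀) := by
    have e := hf a (b * z₀)
    rwa [hanti, ← mul_assoc a b z₀, hswap, hμ] at e
  have hτw : τ (x * (τ z₀ * z₀) * τ y) = y * (τ z₀ * z₀) * τ x := by
    rw [hanti, hτinv, hanti, hanti, hτinv, ← mul_assoc]
  have hA := hf.mu_mul_apply_tau hτinv hμτ hf0 (x * (τ z₀ * z₀) * τ y)
  rw [hτw, hμ, hμ, hμ] at hA
  linear_combination e x y - e y x + μ z₀ * μ y * hA -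
    μ z₀ * μ x * μ (τ z₀) * μ z₀ * f (y * (τ z₀ * z₀) * τ x) * hμτ y -
    μ z₀ * μ x * f (y * (τ z₀ * z₀) * τ x) * hμτ z₀

theorem apply_mul_apply_mul_z₀_comm_of_anti (x y : S) : f x * f (y * z₀) = f y * f (x * z₀) := by
  linear_combination
    (apply_mul_mul_z₀_mul_z₀_sub_swap_of_anti hf hτinv hanti hμ hμτ hz₀ hf0 x y -
      apply_mul_mul_z₀_mul_z₀_sub_swap_of_anti' hf hτinv hanti hμ hμτ hz₀ hf0 x y) / 4

end Anti

variable (hf : KannappanDAlembertEq τ μ z₀ f) (hτinv : ∀ x, τ (τ x) = x)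
  (hτ : (∀ x y, τ (x * y) = τ x * τ y) ∨ (∀ x y, τ (x * y) = τ y * τ x))
  (hμ : ∀ x y, μ (x * y) = μ x * μ y) (hμτ : ∀ x, μ x * μ (τ x) = 1)
  (hz₀ : ∀ x, z₀ * x = x * z₀) (hf0 : f ≠ 0)

include hf hτinv hτ hμ hμτ hz₀ hf0

theorem apply_mul_apply_mul_z₀_comm (x y : S) : f x * f (y * z₀) = f y * f (x * z₀) := by
  rcases hτ with hhom | hanti
  · exact apply_mul_apply_mul_z₀_comm_of_hom hf hτinv hhom hμ hμτ hz₀ hf0 x y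
  · exact apply_mul_apply_mul_z₀_comm_of_anti hf hτinv hanti hμ hμτ hz₀ hf0 x y

theorem exists_apply_mul_z₀_eq_mul : ∃ L, ∀ x, f (x * z₀) = L * f x := by
  obtain ⟨x₀, hx₀⟩ : ∃ x, f x ≠ 0 := Function.ne_iff.mp hf0
  refine ⟨f (x₀ * z₀) / f x₀, fun x => ?_⟩
  field_simp
  linear_combination apply_mul_apply_mul_z₀_comm hf hτinv hτ hμ hμτ hz₀ hf0 x₀ x

theorem mul_self_eq_apply_z₀ {L : ℂ} (hL : ∀ x, f (x * z₀) = L * f x) : L * L = f z₀ := by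
  obtain ⟨x₀, hx₀⟩ : ∃ x, f x ≠ 0 := Function.ne_iff.mp hf0
  have hA := hf.mu_mul_apply_tau hτinv hμτ hf0
  have hτx₀ : τ (x₀ * τ z₀) = τ x₀ * z₀ := by
    rcases hτ with hhom | hanti
    · rw [hhom, hτinv]
    · rw [hanti, hτinv, hz₀]
  have e := hf x₀ z₀
  have e' := hA (x₀ * τ z₀)
  rw [hτx₀, hμ, hL] at e'
  rw [hL, hL, hL] at e
  refine mul_left_cancel₀ (mul_ne_zero two_ne_zero hx₀) ?_
  linear_combination e + μ z₀ * L * e' - L * L * (μ x₀ * f (τ x₀)) * hμτ z₀ - L * L * hA x₀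

end KannappanDAlembertEq

end

theorem stmt_5 {S : Type*} [Semigroup S] (τ : S → S)
    (hτinv : ∀ x, τ (τ x) = x)
    (hτ : (∀ x y, τ (x * y) = τ x * τ y) ∨ (∀ x y, τ (x * y) = τ y * τ x))
    (μ : S → ℂ) (hμ : ∀ x y, μ (x * y) = μ x * μ y)
    (hμτ : ∀ x, μ (x * τ x) = 1)
    (z₀ : S) (hz₀ : ∀ x, z₀ * x = x * z₀)
    (f : S → ℂ) (hf0 : f ≠ 0) (hf : ∀ x y, f (x * y * z₀) + μ y * f (x * τ y * z₀) = 2 * f x * f y) :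
    (∀ x y, (fun x => f (x * z₀) / f z₀) (x * y) + μ y * (fun x => f (x * z₀) / f z₀) (x * τ y) =
      2 * (fun x => f (x * z₀) / f z₀) x * (fun x => f (x * z₀) / f z₀) y) ∧
    (∀ x, (fun x => f (x * z₀) / f z₀) (x * z₀) =
      (fun x => f (x * z₀) / f z₀) z₀ * (fun x => f (x * z₀) / f z₀) x) ∧
    (fun x => f (x * z₀) / f z₀) z₀ ≠ 0 ∧
    (∀ x, f x = (fun x => f (x * z₀) / f z₀) z₀ * (fun x => f (x * z₀) / f z₀) x) := by
  have hf' : KannappanDAlembertEq τ μ z₀ f := hf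
  have hμτ' (x : S) : μ x * μ (τ x) = 1 := (hμ x (τ x)).symm.trans (hμτ x)
  obtain ⟨L, hL⟩ := hf'.exists_apply_mul_z₀_eq_mul hτinv hτ hμ hμτ' hz₀ hf0
  have hL0 : L ≠ 0 := by
    rintro rfl
    exact hf0 (hf'.eq_zero_of_forall_apply_mul_eq_zero fun u => by simp [hL])
  have hL2 : L * L = f z₀ := hf'.mul_self_eq_apply_z₀ hτinv hτ hμ hμτ' hz₀ hf0 hL
  have hfz : f z₀ ≠ 0 := hL2 ▸ mul_ne_zero hL0 hL0
  beta_reduce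
  refine ⟨fun x y => ?_, fun x => ?_, ?_, fun x => ?_⟩
  · rw [hL x, hL y, ← hL2]
    field_simp
    linear_combination hf x y
  · rw [hL, hL z₀, hL x, ← hL2]
    field_simp
  · rw [hL]
    exact div_ne_zero (mul_ne_zero hL0 hfz) hfz
  · rw [hL z₀, hL x, ← hL2]
    field_simp
end

section
/- Every nonzero solution f: S → ℂ of f(xyz₀) + μ(y)f(xτ(y)z₀) = 2f(x)f(y) is of the form f = g(z₀)·g where g satisfies g(xy) + μ(y)g(xτ(y)) = 2g(x)g(y), g(z₀) ≠ 0, and g(xz₀) = g(z₀)g(x); moreover f(x) = g(xz₀) = μ(z₀)g(xτ(z₀)) for all x. -/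
/-!
Write `F x = f (x z₀)` and `G x = μ z₀ f (x τ(z₀))`. Substituting `x z₀`, `x τ(z₀)` for `x` and
`y z₀`, `y τ(z₀)` for `y` in the equation gives `(F + G)(x) f(y) = f(x) (F + G)(y)`, so
`F + G = λ f`, and `y = z₀` then gives `λ F = 2 f(z₀) f`. If `λ = 0`, then `G = -F` turns the
equation into the sine addition law `F(x y z₀) = f(x) F(y) + F(x) f(y)`, which forces
`F(x z₀) = κ f(x)` and `κ F = F(z₀) f`; if moreover `κ = 0`, then translating `x` by `z₀` in
the equation gives `F = 0`. In all cases `F = c f`, and `c ≠ 0` since `f ≠ 0`.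
Replacing `y` by `τ(y)` shows `μ(y) f(τ y) = f(y)`, hence `G = c f` as well, so `f(z₀) = c²` and
`g = f / c` is the required solution.
-/

theorem exists_eq_const_mul_of_mul_eq_mul {α K : Type*} [Field K] {f h : α → K} (hf : f ≠ 0)
    (h_eq : ∀ x y, h x * f y = f x * h y) : ∃ c, ∀ x, h x = c * f x := by
  obtain ⟨y, hy⟩ : ∃ y, f y ≠ 0 := Function.ne_iff.mp hf
  exact ⟨h y / f y, fun x => by field_simp; linear_combination h_eq x y⟩

namespace Kannappan

variable {S : Type*} [Semigroup S] {τ : S → S}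

def IsMulOrAntiMul (τ : S → S) : Prop :=
  (∀ x y, τ (x * y) = τ x * τ y) ∨ (∀ x y, τ (x * y) = τ y * τ x)

theorem map_mul_of_commute (hτ : IsMulOrAntiMul τ) {y w : S} (h : Commute (τ y) (τ w)) :
    τ (y * w) = τ y * τ w := by
  rcases hτ with hτ | hτ
  · exact hτ y w
  · rw [hτ, h.eq]

theorem commute_map_of_forall_commute (hτinv : ∀ x, τ (τ x) = x) (hτ : IsMulOrAntiMul τ)
    {a : S} (ha : ∀ x, Commute a x) (x : S) : Commute (τ a) x := by
  rw [← hτinv x]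
  rcases hτ with hτ | hτ <;> rw [Commute, SemiconjBy, ← hτ, ← hτ, (ha _).eq]

def KannappanEq (τ : S → S) (μ : S → ℂ) (z : S) (f : S → ℂ) : Prop :=
  ∀ x y, f (x * y * z) + μ y * f (x * τ y * z) = 2 * f x * f y

variable {μ : S → ℂ} {z : S} {f : S → ℂ}

theorem shift_fst (hf : KannappanEq τ μ z f) {a : S} (ha : ∀ x, Commute a x) (x y : S) :
    f (x * y * z * a) + μ y * f (x * τ y * z * a) = 2 * f (x * a) * f y := by
  have h := hf (x * a) y
  rwa [(ha y).right_comm, (ha z).right_comm, (ha (τ y)).right_comm, (ha z).right_comm] at h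

theorem shift_snd (hτ : IsMulOrAntiMul τ) (hμ : ∀ x y, μ (x * y) = μ x * μ y)
    (hf : KannappanEq τ μ z f) {a : S} (ha : ∀ x, Commute a x) (hτa : ∀ x, Commute (τ a) x)
    (x y : S) :
    f (x * y * z * a) + μ y * μ a * f (x * τ y * z * τ a) = 2 * f x * f (y * a) := by
  have h := hf x (y * a)
  rwa [map_mul_of_commute hτ (hτa (τ y)).symm, hμ, ← mul_assoc, ← mul_assoc, (ha z).right_comm,
    (hτa z).right_comm] at h

theorem mul_apply_map (hτinv : ∀ x, τ (τ x) = x) (hμτ : ∀ x, μ x * μ (τ x) = 1) (hf0 : f ≠ 0)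
    (hf : KannappanEq τ μ z f) (y : S) : μ y * f (τ y) = f y := by
  obtain ⟨x, hx⟩ : ∃ x, f x ≠ 0 := Function.ne_iff.mp hf0
  have h := hf x (τ y)
  rw [hτinv] at h
  refine mul_left_cancel₀ hx ?_
  linear_combination (hf x y - μ y * h + f (x * y * z) * hμτ y) / 2

theorem shift_add_mul_eq (hτinv : ∀ x, τ (τ x) = x) (hτ : IsMulOrAntiMul τ)
    (hμ : ∀ x y, μ (x * y) = μ x * μ y) (hμτ : ∀ x, μ x * μ (τ x) = 1) (hz : ∀ x, Commute z x)
    (hf : KannappanEq τ μ z f) (x y : S) :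
    (f (x * z) + μ z * f (x * τ z)) * f y = f x * (f (y * z) + μ z * f (y * τ z)) := by
  have hτz := commute_map_of_forall_commute hτinv hτ hz
  have hττz : ∀ x, Commute (τ (τ z)) x := by rwa [hτinv]
  have h₁ := shift_fst hf hz x y
  have h₂ := shift_fst hf hτz x y
  have h₃ := shift_snd hτ hμ hf hz hτz x y
  have h₄ := shift_snd hτ hμ hf hτz hττz x y
  rw [hτinv] at h₄
  linear_combination (h₃ + μ z * h₄ - h₁ - μ z * h₂ - μ y * f (x * τ y * z * z) * hμτ z) / 2

theorem shift_shift_eq_of_shift_add_eq_zero (hτinv : ∀ x, τ (τ x) = x) (hτ : IsMulOrAntiMul τ)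
    (hμ : ∀ x y, μ (x * y) = μ x * μ y) (hz : ∀ x, Commute z x)
    (hf : KannappanEq τ μ z f)
    (hK : ∀ x, f (x * z) + μ z * f (x * τ z) = 0) (x y : S) :
    f (x * y * z * z) = f x * f (y * z) + f (x * z) * f y := by
  have hτz := commute_map_of_forall_commute hτinv hτ hz
  have h₁ := shift_snd hτ hμ hf hz hτz x y
  have h₂ := shift_fst hf hτz x y
  linear_combination (h₁ - μ z * h₂ + hK (x * y * z) - 2 * f y * hK x) / 2

theorem exists_shift_eq_const_mul_of_shift_add_eq_zero (hτinv : ∀ x, τ (τ x) = x)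
    (hτ : IsMulOrAntiMul τ)
    (hμ : ∀ x y, μ (x * y) = μ x * μ y) (hz : ∀ x, Commute z x) (hf0 : f ≠ 0)
    (hf : KannappanEq τ μ z f)
    (hK : ∀ x, f (x * z) + μ z * f (x * τ z) = 0) : ∃ c, ∀ x, f (x * z) = c * f x := by
  have hτz := commute_map_of_forall_commute hτinv hτ hz
  have hsum := shift_shift_eq_of_shift_add_eq_zero hτinv hτ hμ hz hf hK
  obtain ⟨y₀, hy₀⟩ : ∃ y, f y ≠ 0 := Function.ne_iff.mp hf0
  have hfz : f z = 0 := by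
    have h := hf y₀ z
    rw [(hτz z).right_comm] at h
    refine (mul_eq_zero.mp ?_).resolve_left hy₀
    linear_combination (hK (y₀ * z) - h) / 2
  obtain ⟨κ, hκ⟩ : ∃ κ, ∀ x, f (x * z * z) = κ * f x := by
    refine exists_eq_const_mul_of_mul_eq_mul hf0 fun x y => ?_
    have h₁ := hsum (x * z) y
    have h₂ := hsum x (y * z)
    rw [(hz y).right_comm] at h₁
    rw [← mul_assoc] at h₂
    linear_combination h₂ - h₁
  have hκz (x : S) : κ * f (x * z) = f (z * z) * f x := by
    have h := hsum x z
    rw [hfz, hκ] at h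
    linear_combination h
  by_cases hκ0 : κ = 0
  · refine ⟨0, fun x => ?_⟩
    rw [zero_mul]
    refine (mul_eq_zero.mp ?_).resolve_right hy₀
    have h := shift_fst hf hz x y₀
    rw [hκ, hκ, hκ0] at h
    linear_combination -h / 2
  · exact ⟨f (z * z) / κ, fun x => by field_simp; linear_combination hκz x⟩

theorem exists_shift_eq_const_mul (hτinv : ∀ x, τ (τ x) = x) (hτ : IsMulOrAntiMul τ)
    (hμ : ∀ x y, μ (x * y) = μ x * μ y) (hμτ : ∀ x, μ x * μ (τ x) = 1) (hz : ∀ x, Commute z x)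
    (hf0 : f ≠ 0) (hf : KannappanEq τ μ z f) :
    ∃ c, ∀ x, f (x * z) = c * f x := by
  obtain ⟨l, hl⟩ := exists_eq_const_mul_of_mul_eq_mul hf0 (shift_add_mul_eq hτinv hτ hμ hμτ hz hf)
  by_cases hl0 : l = 0
  · refine exists_shift_eq_const_mul_of_shift_add_eq_zero hτinv hτ hμ hz hf0 hf fun x => ?_
    rw [hl, hl0, zero_mul]
  · refine ⟨2 * f z / l, fun x => ?_⟩
    have h := hf x z
    rw [(commute_map_of_forall_commute hτinv hτ hz z).right_comm, hl] at h
    field_simp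
    linear_combination h

theorem mul_apply_mul_map_eq (hτinv : ∀ x, τ (τ x) = x) (hτ : IsMulOrAntiMul τ)
    (hμ : ∀ x y, μ (x * y) = μ x * μ y) (hμτ : ∀ x, μ x * μ (τ x) = 1) (hz : ∀ x, Commute z x)
    (hf0 : f ≠ 0) (hf : KannappanEq τ μ z f)
    {c : ℂ} (hc : ∀ x, f (x * z) = c * f x) (x : S) : μ z * f (x * τ z) = c * f x := by
  have h := mul_apply_map hτinv hμτ hf0 hf (x * τ z)
  rw [map_mul_of_commute hτ (by rw [hτinv]; exact (hz _).symm), hτinv, hμ, hc] at h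
  linear_combination -μ z * h + c * mul_apply_map hτinv hμτ hf0 hf x
    + c * μ x * f (τ x) * hμτ z

end Kannappan

open Kannappan in
theorem stmt_6 {S : Type*} [Semigroup S] (τ : S → S)
    (hτinv : ∀ x, τ (τ x) = x)
    (hτ : (∀ x y, τ (x * y) = τ x * τ y) ∨ (∀ x y, τ (x * y) = τ y * τ x))
    (μ : S → ℂ) (hμ : ∀ x y, μ (x * y) = μ x * μ y)
    (hμτ : ∀ x, μ (x * τ x) = 1)
    (z₀ : S) (hz₀ : ∀ x, z₀ * x = x * z₀)
    (f : S → ℂ) (hf0 : f ≠ 0) (hf : ∀ x y, f (x * y * z₀) + μ y * f (x * τ y * z₀) = 2 * f x * f y) :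
    ∃ g : S → ℂ, (∀ x y, g (x * y) + μ y * g (x * τ y) = 2 * g x * g y) ∧
      g z₀ ≠ 0 ∧ (∀ x, g (x * z₀) = g z₀ * g x) ∧
      (∀ x, f x = g z₀ * g x) ∧ (∀ x, f x = g (x * z₀)) ∧
      (∀ x, f x = μ z₀ * g (x * τ z₀)) := by
  have hμτ' (x : S) : μ x * μ (τ x) = 1 := by rw [← hμ, hμτ]
  obtain ⟨c, hc⟩ := exists_shift_eq_const_mul hτinv hτ hμ hμτ' hz₀ hf0 hf
  have hcτ := mul_apply_mul_map_eq hτinv hτ hμ hμτ' hz₀ hf0 hf hc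
  have hc0 : c ≠ 0 := by
    rintro rfl
    refine hf0 (funext fun x => mul_self_eq_zero.mp ?_)
    linear_combination -(hf x x) / 2 + (hc (x * x) + μ x * hc (x * τ x)) / 2
  have hfz : f z₀ = c * c := by
    obtain ⟨y, hy⟩ : ∃ y, f y ≠ 0 := Function.ne_iff.mp hf0
    have h := hf y z₀
    rw [(commute_map_of_forall_commute hτinv hτ hz₀ z₀).right_comm, hc, hcτ, hc] at h
    refine mul_left_cancel₀ hy ?_
    linear_combination -h / 2
  refine ⟨fun x => c⁻¹ * f x, fun x y => ?_, ?_, fun x => ?_, fun x => ?_, fun x => ?_,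
    fun x => ?_⟩ <;> field_simp
  · linear_combination hf x y - hc (x * y) - μ y * hc (x * τ y)
  · rwa [hfz, mul_self_div_self]
  · rw [hc, hfz]; ring
  · rw [hfz]; ring
  · rw [hc, mul_comm]
  · rw [hcτ, mul_comm]
end

section
/- If f: S → ℂ satisfies the variant equation f(xyz₀) + μ(y)f(τ(y)xz₀) = 2f(x)f(y) for all x,y ∈ S, then f(x) = μ(x)f(τ(x)) for all x ∈ S. -/
/-!
Write `d x = f x - μ x f(τ x)`. Specialising the equation at `(u, τ u)` and `(τ u, τ u)` and
eliminating `f (u τ u z₀)` with `μ u μ(τ u) = 1` gives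
`f (u u z₀) - μ(u)² f (τu τu z₀) = 2 μ u f(τ u) d u`.
Adding this identity at `x` to `μ(x)²` times the same identity at `τ x` cancels the left-hand
sides and leaves `2 d(x)² = 0`.
-/

section VariantEquation

variable {S R : Type*} [Mul S] [CommRing R] {τ : S → S} {μ : S → R} {z₀ : S} {f : S → R}

theorem sub_mul_sq_apply_involution_eq (hτ : Function.Involutive τ)
    (hμτ : ∀ u, μ u * μ (τ u) = 1)
    (hf : ∀ x y, f (x * y * z₀) + μ y * f (τ y * x * z₀) = 2 * f x * f y) (u : S) :
    f (u * u * z₀) - μ u ^ 2 * f (τ u * τ u * z₀) =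
      2 * (μ u * f (τ u)) * (f u - μ u * f (τ u)) := by
  have e₁ := hf u (τ u)
  have e₂ := hf (τ u) (τ u)
  rw [hτ u] at e₁ e₂
  linear_combination μ u * e₁ - μ u ^ 2 * e₂ +
    (μ u * f (u * τ u * z₀) - f (u * u * z₀)) * hμτ u

theorem two_mul_sq_sub_mul_apply_involution_eq_zero (hτ : Function.Involutive τ)
    (hμτ : ∀ u, μ u * μ (τ u) = 1)
    (hf : ∀ x y, f (x * y * z₀) + μ y * f (τ y * x * z₀) = 2 * f x * f y) (x : S) :
    2 * (f x - μ x * f (τ x)) ^ 2 = 0 := by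
  have hx := sub_mul_sq_apply_involution_eq hτ hμτ hf x
  have hτx := sub_mul_sq_apply_involution_eq hτ hμτ hf (τ x)
  rw [hτ x] at hτx
  linear_combination hx + μ x ^ 2 * hτx +
    ((μ x * μ (τ x) + 1) * f (x * x * z₀) + 2 * μ x * f x * f (τ x)
      - 2 * (μ x * μ (τ x) + 1) * f x ^ 2) * hμτ x

theorem eq_mul_apply_involution_of_variant_equation [NoZeroDivisors R] [NeZero (2 : R)]
    (hτ : Function.Involutive τ) (hμτ : ∀ u, μ u * μ (τ u) = 1)
    (hf : ∀ x y, f (x * y * z₀) + μ y * f (τ y * x * z₀) = 2 * f x * f y) (x : S) :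
    f x = μ x * f (τ x) := by
  have h := two_mul_sq_sub_mul_apply_involution_eq_zero hτ hμτ hf x
  rw [mul_eq_zero, or_iff_right two_ne_zero, sq_eq_zero_iff, sub_eq_zero] at h
  exact h

end VariantEquation

theorem stmt_8_general {S : Type*} [Semigroup S] (τ : S → S)
    (hτinv : ∀ x, τ (τ x) = x)
    (μ : S → ℂ) (hμ : ∀ x y, μ (x * y) = μ x * μ y)
    (hμτ : ∀ x, μ (x * τ x) = 1)
    (z₀ : S)
    (f : S → ℂ) (hf : ∀ x y, f (x * y * z₀) + μ y * f (τ y * x * z₀) = 2 * f x * f y) :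
    ∀ x, f x = μ x * f (τ x) :=
  eq_mul_apply_involution_of_variant_equation hτinv (fun u => (hμ u (τ u)).symm.trans (hμτ u)) hf

theorem stmt_8 {S : Type*} [Semigroup S] (τ : S → S)
    (hτinv : ∀ x, τ (τ x) = x)
    (hτ : (∀ x y, τ (x * y) = τ x * τ y) ∨ (∀ x y, τ (x * y) = τ y * τ x))
    (μ : S → ℂ) (hμ : ∀ x y, μ (x * y) = μ x * μ y)
    (hμτ : ∀ x, μ (x * τ x) = 1)
    (z₀ : S) (hz₀ : ∀ x, z₀ * x = x * z₀)
    (f : S → ℂ) (hf : ∀ x y, f (x * y * z₀) + μ y * f (τ y * x * z₀) = 2 * f x * f y) :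
    ∀ x, f x = μ x * f (τ x) :=
  stmt_8_general τ hτinv μ hμ hμτ z₀ f hf
end

section
/- If f: S → ℂ satisfies f(xyz₀) + μ(y)f(τ(y)xz₀) = 2f(x)f(y) for all x,y ∈ S, then f(xτ(z₀)z₀) = μ(τ(z₀))f(z₀)f(x) and f(xz₀²) = f(x)f(z₀) for all x ∈ S. -/
/-!
Put `a = τ z₀ * z₀`: it is central, fixed by `τ`, and `μ a = 1`. The equation at `(x * a, y)`
and at `(x, y * a)` has the same left side, so `f (x * a) * f y = f x * f (y * a)`; at `(x, a)` it
gives `f (x * a * z₀) = f x * f a`. Combining the two with `x = τ z₀` yields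
`f (x * a) = f (τ z₀) * f x` (when `f a = 0`, take `x = y * τ z₀` to see that `f (y * a) = 0`).
The equation at `(x, z₀)` and `(x, τ z₀)`, together with `μ z₀ * μ (τ z₀) = 1`, gives
`f x * f (τ z₀) = μ (τ z₀) * f z₀ * f x`, and both identities follow.
-/

section

variable {S : Type*} [Semigroup S]

def IsHomOrAntihom (τ : S → S) : Prop :=
  (∀ x y, τ (x * y) = τ x * τ y) ∨ (∀ x y, τ (x * y) = τ y * τ x)

namespace IsHomOrAntihom

variable {τ : S → S}

theorem map_mem_center (hτ : IsHomOrAntihom τ) (hτinv : Function.Involutive τ) {z : S}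
    (hz : z ∈ Set.center S) : τ z ∈ Set.center S := by
  rw [Semigroup.mem_center_iff] at hz ⊢
  intro g
  obtain ⟨g, rfl⟩ := hτinv.surjective g
  rcases hτ with h | h <;> rw [← h, ← h, hz]

theorem map_mul_of_map_mem_center (hτ : IsHomOrAntihom τ) (y : S) {z : S}
    (hz : τ z ∈ Set.center S) : τ (y * z) = τ y * τ z := by
  rcases hτ with h | h
  · exact h y z
  · rw [h, Semigroup.mem_center_iff.mp hz]

theorem map_mul_mem_center (hτ : IsHomOrAntihom τ) (hτinv : Function.Involutive τ) {z : S}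
    (hz : z ∈ Set.center S) : τ z * z ∈ Set.center S :=
  Set.mul_mem_center (hτ.map_mem_center hτinv hz) hz

theorem map_map_mul (hτ : IsHomOrAntihom τ) (hτinv : Function.Involutive τ) {z : S}
    (hz : z ∈ Set.center S) : τ (τ z * z) = τ z * z := by
  rw [hτ.map_mul_of_map_mem_center _ (hτ.map_mem_center hτinv hz), hτinv,
    Semigroup.mem_center_iff.mp hz]

end IsHomOrAntihom

def MuDAlembert (τ : S → S) (μ : S → ℂ) (z₀ : S) (f : S → ℂ) : Prop :=
  ∀ x y, f (x * y * z₀) + μ y * f (τ y * x * z₀) = 2 * f x * f y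

namespace MuDAlembert

variable {τ : S → S} {μ : S → ℂ} {z₀ a : S} {f : S → ℂ}

theorem apply_mul_mul_eq (hf : MuDAlembert τ μ z₀ f) (ha : a ∈ Set.center S) (hτa : τ a = a)
    (hμa : μ a = 1) (x : S) : f (x * a * z₀) = f x * f a := by
  have h := hf x a
  rw [hτa, hμa, ← Semigroup.mem_center_iff.mp ha x] at h
  linear_combination h / 2

theorem apply_mul_mul_comm (hf : MuDAlembert τ μ z₀ f) (hτ : IsHomOrAntihom τ)
    (hμ : ∀ x y, μ (x * y) = μ x * μ y) (ha : a ∈ Set.center S) (hτa : τ a = a)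
    (hμa : μ a = 1) (x y : S) : f (x * a) * f y = f x * f (y * a) := by
  have hac := Semigroup.mem_center_iff.mp ha
  have h₁ := hf (x * a) y
  have h₂ := hf x (y * a)
  rw [hτ.map_mul_of_map_mem_center y (by rwa [hτa]), hτa, hμ, hμa, mul_one] at h₂
  rw [mul_assoc x a y, ← hac y, ← mul_assoc, ← mul_assoc] at h₁
  rw [mul_assoc (τ y) a x, ← hac x, ← mul_assoc, ← mul_assoc] at h₂
  linear_combination (h₂ - h₁) / 2

theorem mul_mul_eq_apply_mul_mul (hf : MuDAlembert τ μ z₀ f) (hτ : IsHomOrAntihom τ)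
    (hμ : ∀ x y, μ (x * y) = μ x * μ y) (ha : a ∈ Set.center S) (hτa : τ a = a)
    (hμa : μ a = 1) (x y : S) : f x * f a * f y = f (x * z₀) * f (y * a) := by
  have h := hf.apply_mul_mul_comm hτ hμ ha hτa hμa (x * z₀) y
  rwa [mul_assoc, Semigroup.mem_center_iff.mp ha z₀, ← mul_assoc,
    hf.apply_mul_mul_eq ha hτa hμa] at h

theorem apply_mul_mul_self_add (hf : MuDAlembert τ μ z₀ f) (hτ : IsHomOrAntihom τ)
    (hτinv : Function.Involutive τ) (hz₀ : z₀ ∈ Set.center S) (x : S) :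
    f (x * z₀ * z₀) + μ z₀ * f (x * (τ z₀ * z₀)) = 2 * f x * f z₀ := by
  have h := hf x z₀
  rwa [← Semigroup.mem_center_iff.mp (hτ.map_mem_center hτinv hz₀) x, mul_assoc x (τ z₀)] at h

theorem mul_apply_map_eq (hf : MuDAlembert τ μ z₀ f) (hτ : IsHomOrAntihom τ)
    (hτinv : Function.Involutive τ) (hz₀ : z₀ ∈ Set.center S) (hμz₀ : μ z₀ * μ (τ z₀) = 1)
    (x : S) : f x * f (τ z₀) = μ (τ z₀) * f z₀ * f x := by
  have hA := hf.apply_mul_mul_self_add hτ hτinv hz₀ x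
  have hB := hf x (τ z₀)
  rw [hτinv, ← Semigroup.mem_center_iff.mp hz₀ x, mul_assoc x (τ z₀)] at hB
  linear_combination (μ (τ z₀) * hA - hB) / 2 - f (x * (τ z₀ * z₀)) / 2 * hμz₀

theorem apply_mul_map_mul_eq (hf : MuDAlembert τ μ z₀ f) (hτ : IsHomOrAntihom τ)
    (hτinv : Function.Involutive τ) (hμ : ∀ x y, μ (x * y) = μ x * μ y)
    (hz₀ : z₀ ∈ Set.center S) (hμz₀ : μ z₀ * μ (τ z₀) = 1) (x : S) :
    f (x * (τ z₀ * z₀)) = f (τ z₀) * f x := by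
  have ha := hτ.map_mul_mem_center hτinv hz₀
  have hμa : μ (τ z₀ * z₀) = 1 := by rw [hμ, mul_comm, hμz₀]
  have key := hf.mul_mul_eq_apply_mul_mul hτ hμ ha (hτ.map_map_mul hτinv hz₀) hμa
  by_cases hfa : f (τ z₀ * z₀) = 0
  · have hvanish : ∀ y, f (y * (τ z₀ * z₀)) = 0 := fun y ↦ by
      have h := key (y * τ z₀) y
      rw [hfa, mul_assoc y (τ z₀)] at h
      exact mul_self_eq_zero.mp (by linear_combination -h)
    have hτz₀ : f (τ z₀) = 0 := by
      have h := hf (τ z₀) z₀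
      rw [← Semigroup.mem_center_iff.mp ha z₀, mul_assoc (τ z₀) (τ z₀), hvanish, hvanish] at h
      have h' := hf.mul_apply_map_eq hτ hτinv hz₀ hμz₀ (τ z₀)
      exact mul_self_eq_zero.mp (by linear_combination h' - μ (τ z₀) / 2 * h)
    rw [hvanish, hτz₀, zero_mul]
  · exact mul_left_cancel₀ hfa (by linear_combination -key (τ z₀) x)

end MuDAlembert

end

theorem stmt_9 {S : Type*} [Semigroup S] (τ : S → S)
    (hτinv : ∀ x, τ (τ x) = x)
    (hτ : (∀ x y, τ (x * y) = τ x * τ y) ∨ (∀ x y, τ (x * y) = τ y * τ x))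
    (μ : S → ℂ) (hμ : ∀ x y, μ (x * y) = μ x * μ y)
    (hμτ : ∀ x, μ (x * τ x) = 1)
    (z₀ : S) (hz₀ : ∀ x, z₀ * x = x * z₀)
    (f : S → ℂ) (hf : ∀ x y, f (x * y * z₀) + μ y * f (τ y * x * z₀) = 2 * f x * f y) :
    (∀ x, f (x * τ z₀ * z₀) = μ (τ z₀) * f z₀ * f x) ∧
    (∀ x, f (x * (z₀ * z₀)) = f x * f z₀) := by
  have hf : MuDAlembert τ μ z₀ f := hf
  have hz : z₀ ∈ Set.center S := Semigroup.mem_center_iff.mpr fun g ↦ (hz₀ g).symm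
  have hμz₀ : μ z₀ * μ (τ z₀) = 1 := by rw [← hμ, hμτ]
  have hmul := hf.apply_mul_map_mul_eq hτ hτinv hμ hz hμz₀
  have hmap := hf.mul_apply_map_eq hτ hτinv hz hμz₀
  refine ⟨fun x ↦ ?_, fun x ↦ ?_⟩
  · rw [mul_assoc, hmul]
    linear_combination hmap x
  · rw [← mul_assoc]
    linear_combination hf.apply_mul_mul_self_add hτ hτinv hz x - μ z₀ * hmul x
      - μ z₀ * hmap x - f z₀ * f x * hμz₀
end

section
/- If f: S → ℂ is a nonzero solution of f(xyz₀) + μ(y)f(τ(y)xz₀) = 2f(x)f(y), then g(x) := f(xz₀)/f(z₀) satisfies the variant d'Alembert equation g(xy) + μ(y)g(τ(y)x) = 2g(x)g(y) and g(xz₀) = g(z₀)g(x) for all x ∈ S. -/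
/-!
Write `c = f z₀`. Specialising the equation at `(x z₀, y)`, `(x, y z₀)` and `(u, z₀)` and using
that `z₀` and `τ z₀` are central, one eliminates down to `L f(x z₀) = 2 c² f(x)` for the constant
`L = f(z₀²) + μ(z₀) f(τ(z₀) z₀)`. A separate elimination shows `c ≠ 0` (otherwise `f(· z₀)`
vanishes, which forces `f = 0`), so `f(x z₀) = k f(x)` with `k = 2c²/L`, and the identity
`f(x z₀) f(y) - f(x) f(y z₀) = μ(y) (f(τ(y) x z₀²) - c f(τ(y) x))`, whose left side now vanishes,
forces `k² = c`. Hence `g = f / k`, and both claims reduce to the equation for `f` and to `k² = c`.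
-/

theorem mul_comm_apply_of_mul_comm {S : Type*} [Semigroup S] {τ : S → S} {z : S}
    (hτinv : Function.Involutive τ)
    (hτ : (∀ x y, τ (x * y) = τ x * τ y) ∨ (∀ x y, τ (x * y) = τ y * τ x))
    (hz : ∀ x, z * x = x * z) (x : S) : τ z * x = x * τ z := by
  rcases hτ with h | h
  · calc τ z * x = τ (z * τ x) := by rw [h, hτinv]
      _ = τ (τ x * z) := by rw [hz]
      _ = x * τ z := by rw [h, hτinv]
  · calc τ z * x = τ (τ x * z) := by rw [h, hτinv]
      _ = τ (z * τ x) := by rw [hz]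
      _ = x * τ z := by rw [h, hτinv]

theorem apply_mul_of_mul_comm {S : Type*} [Semigroup S] {τ : S → S} {z : S}
    (hτinv : Function.Involutive τ)
    (hτ : (∀ x y, τ (x * y) = τ x * τ y) ∨ (∀ x y, τ (x * y) = τ y * τ x))
    (hz : ∀ x, z * x = x * z) (y : S) : τ (y * z) = τ z * τ y := by
  rcases hτ with h | h
  · rw [h, mul_comm_apply_of_mul_comm hτinv (.inl h) hz]
  · exact h y z

def IsKannappanSolution {S : Type*} [Semigroup S] (τ : S → S) (μ : S → ℂ) (z : S)
    (f : S → ℂ) : Prop :=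
  ∀ x y, f (x * y * z) + μ y * f (τ y * x * z) = 2 * f x * f y

namespace IsKannappanSolution

variable {S : Type*} [Semigroup S] {τ : S → S} {μ : S → ℂ} {z : S} {f : S → ℂ}

theorem eq_zero_of_apply_mul_eq_zero (hf : IsKannappanSolution τ μ z f)
    (h : ∀ u, f (u * z) = 0) : f = 0 := by
  funext x
  have hx := hf x x
  rw [h, h, mul_zero, add_zero, mul_assoc, zero_eq_mul] at hx
  simpa using hx

theorem apply_mul_mul_center (hf : IsKannappanSolution τ μ z f) (hz : ∀ x, z * x = x * z)
    (x y : S) :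
    f (x * y * z * z) + μ y * f (τ y * x * z * z) = 2 * f (x * z) * f y := by
  have h := hf (x * z) y
  rwa [mul_assoc x z y, hz y, ← mul_assoc x y z, ← mul_assoc (τ y) x z] at h

theorem cross_sub_eq (hf : IsKannappanSolution τ μ z f) (hz : ∀ x, z * x = x * z)
    (hτmul : ∀ y, τ (y * z) = τ z * τ y) (hμ : ∀ x y, μ (x * y) = μ x * μ y) (x y : S) :
    f (x * z) * f y - f x * f (y * z) =
      μ y * (f (τ y * x * z * z) - f z * f (τ y * x)) := by
  have hright := hf x (y * z)
  rw [← mul_assoc x y z, hμ, hτmul, mul_assoc (τ z) (τ y) x] at hright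
  linear_combination hright / 2 - (hf.apply_mul_mul_center hz x y) / 2
    - μ y * (hf (τ y * x) z) / 2

theorem center_mul_add_eq (hf : IsKannappanSolution τ μ z f) (hz : ∀ x, z * x = x * z)
    (hτz : ∀ x, τ z * x = x * τ z) (x y : S) :
    f z * (f (x * y) + μ y * f (τ y * x)) = (f (x * z) + μ z * f (τ z * x)) * f y := by
  have h := hf (τ z * x) y
  rw [mul_assoc (τ z) x y, ← mul_assoc (τ y) (τ z) x, ← hτz (τ y),
    mul_assoc (τ z) (τ y) x] at h
  linear_combination -(hf (x * y) z) / 2 - μ y * (hf (τ y * x) z) / 2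
    + μ z * h / 2 + (hf.apply_mul_mul_center hz x y) / 2

theorem center_mul_add_center_eq (hf : IsKannappanSolution τ μ z f)
    (hz : ∀ x, z * x = x * z) (hτz : ∀ x, τ z * x = x * τ z)
    (hτmul : ∀ y, τ (y * z) = τ z * τ y) (hμ : ∀ x y, μ (x * y) = μ x * μ y) (x : S) :
    f z * (f (x * z) + μ z * f (τ z * x)) = (f (z * z) + μ z * f (τ z * z)) * f x := by
  have hsub : ∀ x y, f (x * y * z * z) - f z * f (x * y) =
      f x * f (y * z) - μ z * f (τ z * x) * f y := fun x y => by
    linear_combination hf.apply_mul_mul_center hz x y - hf.center_mul_add_eq hz hτz x y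
      + hf.cross_sub_eq hz hτmul hμ x y
  have h := hsub z x
  rw [hz x] at h
  linear_combination hsub x z - h

theorem mul_apply_mul_center (hf : IsKannappanSolution τ μ z f)
    (hz : ∀ x, z * x = x * z) (hτz : ∀ x, τ z * x = x * τ z)
    (hτmul : ∀ y, τ (y * z) = τ z * τ y) (hμ : ∀ x y, μ (x * y) = μ x * μ y) (x : S) :
    (f (z * z) + μ z * f (τ z * z)) * f (x * z) = 2 * f z ^ 2 * f x := by
  have h := hf.center_mul_add_center_eq hz hτz hτmul hμ (x * z)
  rw [← mul_assoc (τ z) x z] at h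
  linear_combination f z * hf x z - h

theorem apply_center_ne_zero (hf : IsKannappanSolution τ μ z f) (hz : ∀ x, z * x = x * z)
    (hτmul : ∀ y, τ (y * z) = τ z * τ y) (hμ : ∀ x y, μ (x * y) = μ x * μ y) (hf0 : f ≠ 0) :
    f z ≠ 0 := by
  intro hc
  obtain ⟨a, ha⟩ : ∃ a, f a ≠ 0 := Function.ne_iff.mp hf0
  have hsum : ∀ x y, f (x * y * z * z) = f (x * z) * f y + f x * f (y * z) := fun x y => by
    linear_combination hf.apply_mul_mul_center hz x y + hf.cross_sub_eq hz hτmul hμ x y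
      - μ y * f (τ y * x) * hc
  have hswap : ∀ x y, f x * f (y * z * z) = f (x * z * z) * f y := fun x y => by
    have h := hsum (x * z) y
    rw [mul_assoc x z y, hz y, ← mul_assoc x y z] at h
    have h' := hsum x (y * z)
    rw [← mul_assoc x y z] at h'
    linear_combination h - h'
  have hzzzz : f (z * z * z * z) = 0 := by
    linear_combination hsum z z + 2 * f (z * z) * hc
  have hzz : f (z * z) = 0 := by
    have h1 := hswap a (z * z)
    have h2 := hswap a (a * z)
    rw [hsum a z, hc] at h2
    rw [hzzzz] at h1
    have : f a ^ 2 * f (z * z) ^ 2 = 0 := by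
      linear_combination f (z * z) * h2 - f (a * z) * h1
    simpa [ha] using this
  apply hf0
  apply hf.eq_zero_of_apply_mul_eq_zero
  intro x
  have hvanish : ∀ u, f (u * z * z) * f (x * z) = 0 := fun u => by
    have h := hswap u (x * z)
    rw [hsum x z, hc, hzz] at h
    linear_combination -h
  have h := hf.apply_mul_mul_center hz x a
  have : 2 * f a * f (x * z) ^ 2 = 0 := by
    linear_combination -(f (x * z)) * h + hvanish (x * a) + μ a * hvanish (τ a * x)
  simpa [ha] using this

theorem exists_sq_eq_apply_center (hf : IsKannappanSolution τ μ z f)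
    (hτinv : Function.Involutive τ)
    (hτ : (∀ x y, τ (x * y) = τ x * τ y) ∨ (∀ x y, τ (x * y) = τ y * τ x))
    (hz : ∀ x, z * x = x * z) (hμ : ∀ x y, μ (x * y) = μ x * μ y)
    (hμτ : ∀ x, μ (x * τ x) = 1) (hf0 : f ≠ 0) :
    ∃ k : ℂ, k ≠ 0 ∧ k ^ 2 = f z ∧ ∀ x, f (x * z) = k * f x := by
  have hτz := mul_comm_apply_of_mul_comm hτinv hτ hz
  have hτmul := apply_mul_of_mul_comm hτinv hτ hz
  have hc := hf.apply_center_ne_zero hz hτmul hμ hf0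
  obtain ⟨a, ha⟩ : ∃ a, f a ≠ 0 := Function.ne_iff.mp hf0
  have hscale := hf.mul_apply_mul_center hz hτz hτmul hμ
  set L := f (z * z) + μ z * f (τ z * z)
  have hL : L ≠ 0 := by
    intro hL
    have h := hscale a
    rw [hL, zero_mul] at h
    exact mul_ne_zero (mul_ne_zero two_ne_zero (pow_ne_zero 2 hc)) ha h.symm
  set k := 2 * f z ^ 2 / L
  have hk : k ≠ 0 := by simp [k, hc, hL]
  have hF : ∀ x, f (x * z) = k * f x := fun x => by
    rw [div_mul_eq_mul_div, eq_div_iff hL]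
    linear_combination hscale x
  refine ⟨k, hk, ?_, hF⟩
  have h := hf.cross_sub_eq hz hτmul hμ z (τ a)
  simp only [hτinv a, hF] at h
  have hμa : μ (τ a) ≠ 0 := right_ne_zero_of_mul_eq_one (a := μ a) (by rw [← hμ, hμτ])
  have : μ (τ a) * k * f a * (k ^ 2 - f z) = 0 := by linear_combination -h
  simpa [hμa, hk, ha, sub_eq_zero] using this

end IsKannappanSolution

theorem stmt_10 {S : Type*} [Semigroup S] (τ : S → S)
    (hτinv : ∀ x, τ (τ x) = x)
    (hτ : (∀ x y, τ (x * y) = τ x * τ y) ∨ (∀ x y, τ (x * y) = τ y * τ x))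
    (μ : S → ℂ) (hμ : ∀ x y, μ (x * y) = μ x * μ y)
    (hμτ : ∀ x, μ (x * τ x) = 1)
    (z₀ : S) (hz₀ : ∀ x, z₀ * x = x * z₀)
    (f : S → ℂ) (hf0 : f ≠ 0) (hf : ∀ x y, f (x * y * z₀) + μ y * f (τ y * x * z₀) = 2 * f x * f y) :
    (∀ x y, (fun x => f (x * z₀) / f z₀) (x * y) + μ y * (fun x => f (x * z₀) / f z₀) (τ y * x) =
      2 * (fun x => f (x * z₀) / f z₀) x * (fun x => f (x * z₀) / f z₀) y) ∧
    (∀ x, (fun x => f (x * z₀) / f z₀) (x * z₀) =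
      (fun x => f (x * z₀) / f z₀) z₀ * (fun x => f (x * z₀) / f z₀) x) := by
  obtain ⟨k, hk, hk2, hF⟩ :=
    IsKannappanSolution.exists_sq_eq_apply_center hf hτinv hτ hz₀ hμ hμτ hf0
  have hg : ∀ x, f (x * z₀) / f z₀ = f x / k := fun x => by
    rw [hF, ← hk2]
    field_simp
  simp only [hg]
  constructor
  · intro x y
    field_simp
    linear_combination hf x y - hF (x * y) - μ y * hF (τ y * x)
  · intro x
    rw [hF, ← hk2]
    field_simp
end

section
/- Let τ be an involutive automorphism of S. The nonzero solutions f: S → ℂ of f(xyz₀) + μ(y)f(τ(y)xz₀) = 2f(x)f(y) are exactly the functions f(x) = χ(z₀)·(χ(x) + μ(x)χ(τ(x)))/2 where χ: S → ℂ is multiplicative with χ(z₀) ≠ 0 and μ(z₀)χ(τ(z₀)) = χ(z₀). -/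
/-!
Writing `Ψ(x, y) = g(xy) - g(x)g(y)`, d'Alembert's equation forces `Ψ` to have rank one,
`Ψ(x, y) = φ(x)φ(y)`, and then `g ± φ` are multiplicative; the involution turns `g + φ` into
`g - φ`. For the equation with `z₀`, right translation by the central element `z₀` acts on a
solution `f` as a nonzero scalar `c`, so `f / c` solves d'Alembert's equation; comparing
`f(x z₀) = c f(x)` with `2 f = c (χ + μ · χ ∘ τ)` and using the independence of distinct
multiplicative functions gives `χ(z₀) = μ(z₀) χ(τ z₀) = c`.
-/

section Semigroup

variable {S K : Type*} [Semigroup S]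

def mulDefect [CommRing K] (g : S → K) (x y : S) : K := g (x * y) - g x * g y

theorem mulDefect_mul_mulDefect [CommRing K] {g : S → K}
    (hg : ∀ x y z, g (x * y * z) =
      g (x * y) * g z + g (x * z) * g y + g (y * z) * g x - 2 * g x * g y * g z)
    (x y z w : S) :
    mulDefect g x y * mulDefect g z w = mulDefect g x w * mulDefect g y z := by
  have e₁ := hg x y (z * w)
  have e₂ := hg x (y * z) w
  have e₃ := hg x y z
  have e₄ := hg x z w
  simp only [mul_assoc] at e₁ e₂ e₃ e₄
  unfold mulDefect
  linear_combination e₂ - e₁ + g w * e₃ - g y * e₄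

theorem exists_addition_formula [Field K] [IsAlgClosed K] {g : S → K}
    (hg : ∀ x y z, g (x * y * z) =
      g (x * y) * g z + g (x * z) * g y + g (y * z) * g x - 2 * g x * g y * g z) :
    ∃ φ : S → K, (∀ x y, g (x * y) = g x * g y + φ x * φ y) ∧
      ∀ x y, φ (x * y) = φ x * g y + g x * φ y := by
  by_cases hdiag : ∀ a, mulDefect g a a = 0
  · refine ⟨0, fun x y => ?_, fun x y => by simp⟩
    have h := mulDefect_mul_mulDefect hg x x y y
    rw [hdiag, hdiag, zero_mul, eq_comm, mul_self_eq_zero, mulDefect, sub_eq_zero] at h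
    simp [h]
  · obtain ⟨a, ha⟩ := not_forall.mp hdiag
    obtain ⟨s, hs⟩ := IsAlgClosed.exists_pow_nat_eq (mulDefect g a a) two_pos
    have hs0 : s ≠ 0 := by
      rintro rfl
      exact ha (by simp [← hs])
    refine ⟨fun x => mulDefect g x a / s, fun x y => ?_, fun x y => ?_⟩
    · have h := mulDefect_mul_mulDefect hg x y a a
      rw [← hs] at h
      unfold mulDefect at h ⊢
      field_simp
      linear_combination h
    · have h := hg x y a
      unfold mulDefect
      field_simp
      linear_combination h

theorem mul_apply_eq_zero_of_mul_eq_mul [CommRing K] [IsDomain K] {χ₁ χ₂ : S → K}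
    (h₁ : ∀ x y, χ₁ (x * y) = χ₁ x * χ₁ y) (h₂ : ∀ x y, χ₂ (x * y) = χ₂ x * χ₂ y)
    {p q : K} (h : ∀ x, p * χ₁ x = q * χ₂ x) {y : S} (hy : χ₁ y ≠ χ₂ y) (x : S) :
    p * χ₁ x = 0 := by
  have hxy := h (x * y)
  rw [h₁, h₂] at hxy
  have : p * χ₁ x * (χ₁ y - χ₂ y) = 0 := by linear_combination hxy - χ₂ y * h x
  exact (mul_eq_zero.mp this).resolve_right (sub_ne_zero.mpr hy)

theorem apply_eq_of_add_mul_right_eq [CommRing K] [IsDomain K] [NeZero (2 : K)]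
    {χ₁ χ₂ : S → K}
    (h₁ : ∀ x y, χ₁ (x * y) = χ₁ x * χ₁ y) (h₂ : ∀ x y, χ₂ (x * y) = χ₂ x * χ₂ y)
    (hne₁ : ∃ x, χ₁ x ≠ 0) (hne₂ : ∃ x, χ₂ x ≠ 0) {z : S} {c : K}
    (h : ∀ x, χ₁ (x * z) + χ₂ (x * z) = c * (χ₁ x + χ₂ x)) :
    χ₁ z = c ∧ χ₂ z = c := by
  have hrel : ∀ x, (χ₁ z - c) * χ₁ x = (c - χ₂ z) * χ₂ x := fun x => by
    have hx := h x
    rw [h₁, h₂] at hx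
    linear_combination hx
  obtain ⟨x₁, hx₁⟩ := hne₁
  by_cases heq : ∀ y, χ₁ y = χ₂ y
  · have hx := hrel x₁
    rw [← heq x₁, ← heq z] at hx
    have h2 : 2 * (χ₁ z - c) * χ₁ x₁ = 0 := by linear_combination hx
    have hz : χ₁ z = c := by simpa [hx₁, sub_eq_zero, two_ne_zero] using h2
    exact ⟨hz, heq z ▸ hz⟩
  · obtain ⟨y, hy⟩ := not_forall.mp heq
    obtain ⟨x₂, hx₂⟩ := hne₂
    have e₁ := mul_apply_eq_zero_of_mul_eq_mul h₁ h₂ hrel hy x₁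
    have e₂ := mul_apply_eq_zero_of_mul_eq_mul h₂ h₁ (fun x => (hrel x).symm) (Ne.symm hy) x₂
    exact ⟨sub_eq_zero.mp ((mul_eq_zero.mp e₁).resolve_right hx₁),
      (sub_eq_zero.mp ((mul_eq_zero.mp e₂).resolve_right hx₂)).symm⟩

end Semigroup

section Involution

variable {S : Type*} [Semigroup S] {τ : S → S} {μ : S → ℂ}

theorem mu_mul_mu_tau (hμ : ∀ x y, μ (x * y) = μ x * μ y) (hμτ : ∀ x, μ (x * τ x) = 1)
    (x : S) : μ x * μ (τ x) = 1 := by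
  rw [← hμ, hμτ]

theorem mu_mul_apply_tau_mul (hτ : ∀ x y, τ (x * y) = τ x * τ y)
    (hμ : ∀ x y, μ (x * y) = μ x * μ y) {χ : S → ℂ} (hχ : ∀ x y, χ (x * y) = χ x * χ y)
    (x y : S) : μ (x * y) * χ (τ (x * y)) = μ x * χ (τ x) * (μ y * χ (τ y)) := by
  rw [hμ, hτ, hχ]
  ring

theorem exists_mu_mul_apply_tau_ne_zero (hτinv : Function.Involutive τ)
    (hμ : ∀ x y, μ (x * y) = μ x * μ y) (hμτ : ∀ x, μ (x * τ x) = 1) {χ : S → ℂ}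
    (h : ∃ x, χ x ≠ 0) : ∃ x, μ x * χ (τ x) ≠ 0 := by
  obtain ⟨x, hx⟩ := h
  refine ⟨τ x, ?_⟩
  rw [hτinv]
  exact mul_ne_zero (right_ne_zero_of_mul_eq_one (mu_mul_mu_tau hμ hμτ x)) hx

theorem mu_mul_apply_tau_of_dAlembert (hτinv : Function.Involutive τ)
    (hμ : ∀ x y, μ (x * y) = μ x * μ y) (hμτ : ∀ x, μ (x * τ x) = 1) {g : S → ℂ}
    (hg : ∀ x y, g (x * y) + μ y * g (τ y * x) = 2 * g x * g y) (x : S) :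
    μ x * g (τ x) = g x := by
  have e₁ := hg x x
  have e₂ := hg (τ x) x
  have e₃ := hg (τ x) (τ x)
  have e₄ := hg x (τ x)
  rw [hτinv] at e₃ e₄
  have hm := mu_mul_mu_tau hμ hμτ x
  have : (g x - μ x * g (τ x)) * (g x - μ x * g (τ x)) = 0 := by
    linear_combination (μ x / 2) * e₂ - e₁ / 2 - (μ x * μ x / 2) * e₃ + (μ x / 2) * e₄
      + (μ x * g (x * τ x) / 2) * hm - (g (x * x) / 2) * hm
  linear_combination -mul_self_eq_zero.mp this

theorem expansion_of_dAlembert (hτ : ∀ x y, τ (x * y) = τ x * τ y)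
    (hμ : ∀ x y, μ (x * y) = μ x * μ y) {g : S → ℂ}
    (hg : ∀ x y, g (x * y) + μ y * g (τ y * x) = 2 * g x * g y) (x y z : S) :
    g (x * y * z) =
      g (x * y) * g z + g (x * z) * g y + g (y * z) * g x - 2 * g x * g y * g z := by
  have e₁ := hg (x * y) z
  have e₂ := hg (τ z * x) y
  have e₃ := hg x (y * z)
  have e₄ := hg x z
  rw [hτ, hμ] at e₃
  simp only [mul_assoc] at e₁ e₂ e₃ ⊢
  linear_combination (e₁ - μ z * e₂ + e₃ - 2 * g y * e₄) / 2

theorem exists_mul_of_dAlembert (hτinv : Function.Involutive τ)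
    (hτ : ∀ x y, τ (x * y) = τ x * τ y) (hμ : ∀ x y, μ (x * y) = μ x * μ y)
    (hμτ : ∀ x, μ (x * τ x) = 1) {g : S → ℂ}
    (hg : ∀ x y, g (x * y) + μ y * g (τ y * x) = 2 * g x * g y) :
    ∃ χ : S → ℂ, (∀ x y, χ (x * y) = χ x * χ y) ∧ ∀ x, 2 * g x = χ x + μ x * χ (τ x) := by
  obtain ⟨φ, hgφ, hφ⟩ := exists_addition_formula (expansion_of_dAlembert hτ hμ hg)
  have hgτ := mu_mul_apply_tau_of_dAlembert hτinv hμ hμτ hg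
  have hφτ : ∀ x, μ x * φ (τ x) = -φ x := by
    by_cases hφ0 : ∀ y, φ y = 0
    · simp [hφ0]
    obtain ⟨y, hy⟩ := not_forall.mp hφ0
    intro x
    have h := hg y x
    simp only [hgφ] at h
    have : φ y * (φ x + μ x * φ (τ x)) = 0 := by linear_combination h - g y * hgτ x
    linear_combination (mul_eq_zero.mp this).resolve_left hy
  refine ⟨g + φ, fun x y => ?_, fun x => ?_⟩
  · simp only [Pi.add_apply, hgφ, hφ]
    ring
  · simp only [Pi.add_apply]
    linear_combination -hgτ x - hφτ x

theorem apply_eq_zero_of_odd (hτinv : Function.Involutive τ)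
    (hτ : ∀ x y, τ (x * y) = τ x * τ y) (hμ : ∀ x y, μ (x * y) = μ x * μ y)
    (hμτ : ∀ x, μ (x * τ x) = 1) {F f : S → ℂ}
    (hF : ∀ x y, F (x * y) + μ y * F (τ y * x) = 2 * f x * f y)
    (hodd : ∀ w, F w + μ w * F (τ w) = 0) (x : S) : f x = 0 := by
  have hm := mu_mul_mu_tau hμ hμτ x
  have e₁ := hF x x
  have e₂ := hF x (τ x)
  have e₃ := hF (τ x) (τ x)
  have e₄ := hF (τ x) x
  have o₁ := hodd (x * x)
  have o₂ := hodd (x * τ x)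
  rw [hτinv] at e₂ e₃
  rw [hτ, hμ] at o₁
  rw [hτ, hτinv, hμτ] at o₂
  have i : F (x * x) - μ x * F (τ x * x) = 2 * μ x * f x * f (τ x) := by
    linear_combination μ x * e₂ - μ x * o₂ - F (x * x) * hm
  have hA : F (x * x) = f x ^ 2 + μ x * f x * f (τ x) := by linear_combination (e₁ + i) / 2
  have hB : μ x * F (τ x * x) = f x ^ 2 - μ x * f x * f (τ x) := by
    linear_combination (e₁ - i) / 2
  have hD : μ x ^ 2 * F (τ x * τ x) = 3 * μ x * f x * f (τ x) - f x ^ 2 := by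
    linear_combination μ x * e₄ - hB
  have hab : μ x * f x * f (τ x) = 0 := by linear_combination (o₁ - hA - hD) / 4
  have hsq : f x ^ 2 + μ x ^ 2 * f (τ x) ^ 2 = 0 := by
    linear_combination -(μ x ^ 2 * e₃ - μ x * F (x * τ x) * hm - μ x * o₂ - hD + hB - 4 * hab) / 2
  have : f x ^ 4 = 0 := by linear_combination f x ^ 2 * hsq - μ x * f x * f (τ x) * hab
  exact pow_eq_zero_iff (by norm_num) |>.mp this


theorem kannappan_expansion (hτ : ∀ x y, τ (x * y) = τ x * τ y)
    (hμ : ∀ x y, μ (x * y) = μ x * μ y) {f : S → ℂ} {z₀ : S}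
    (hf : ∀ x y, f (x * y * z₀) + μ y * f (τ y * x * z₀) = 2 * f x * f y) (x y z : S) :
    f (x * y * z * z₀) = f (x * y) * f z + f x * f (y * z) - μ z * f (τ z * x) * f y := by
  have e₁ := hf (x * y) z
  have e₂ := hf (τ z * x) y
  have e₃ := hf x (y * z)
  rw [hτ, hμ] at e₃
  simp only [mul_assoc] at e₁ e₂ e₃ ⊢
  linear_combination (e₁ - μ z * e₂ + e₃) / 2

theorem apply_mul_center_mul (hτ : ∀ x y, τ (x * y) = τ x * τ y)
    (hμ : ∀ x y, μ (x * y) = μ x * μ y) {f : S → ℂ} {z₀ : S} (hz₀ : ∀ x, z₀ * x = x * z₀)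
    (hf : ∀ x y, f (x * y * z₀) + μ y * f (τ y * x * z₀) = 2 * f x * f y) (x z : S) :
    f (x * z₀) * (f (z * z₀) + μ z * f (τ z * z₀)) = 2 * f z₀ * f x * f z := by
  have hW : ∀ x, f z₀ * (f (x * z) + μ z * f (τ z * x)) =
      f x * (f (z * z₀) + μ z * f (τ z * z₀)) := fun x => by
    have e₁ := kannappan_expansion hτ hμ hf x z₀ z
    have e₂ := kannappan_expansion hτ hμ hf z₀ x z
    rw [hz₀ z] at e₁
    rw [hz₀ x] at e₂
    linear_combination e₁ - e₂
  have h := hW (x * z₀)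
  have e := hf x z
  simp only [mul_assoc] at h e
  rw [hz₀ z] at h
  linear_combination -h + f z₀ * e

theorem exists_apply_mul_center_eq_mul (hτinv : Function.Involutive τ)
    (hτ : ∀ x y, τ (x * y) = τ x * τ y) (hμ : ∀ x y, μ (x * y) = μ x * μ y)
    (hμτ : ∀ x, μ (x * τ x) = 1) {f : S → ℂ} {z₀ : S} (hz₀ : ∀ x, z₀ * x = x * z₀)
    (hf : ∀ x y, f (x * y * z₀) + μ y * f (τ y * x * z₀) = 2 * f x * f y) (hf0 : f ≠ 0) :
    ∃ c ≠ 0, ∀ x, f (x * z₀) = c * f x := by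
  obtain ⟨x₀, hx₀⟩ := Function.ne_iff.mp hf0
  obtain ⟨z, hz⟩ : ∃ z, f (z * z₀) + μ z * f (τ z * z₀) ≠ 0 := by
    by_contra! h
    exact hx₀ (apply_eq_zero_of_odd hτinv hτ hμ hμτ (F := fun w => f (w * z₀)) hf h x₀)
  set G := f (z * z₀) + μ z * f (τ z * z₀)
  have hc : ∀ x, f (x * z₀) = 2 * f z₀ * f z / G * f x := fun x => by
    rw [div_mul_eq_mul_div, eq_div_iff hz]
    linear_combination apply_mul_center_mul hτ hμ hz₀ hf x z
  refine ⟨_, fun hc0 => hx₀ ?_, hc⟩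
  have h := hf x₀ x₀
  rw [hc, hc, hc0] at h
  exact mul_self_eq_zero.mp (by linear_combination -h / 2)

theorem exists_mul_of_kannappan (hτinv : Function.Involutive τ)
    (hτ : ∀ x y, τ (x * y) = τ x * τ y) (hμ : ∀ x y, μ (x * y) = μ x * μ y)
    (hμτ : ∀ x, μ (x * τ x) = 1) {f : S → ℂ} {z₀ : S} (hz₀ : ∀ x, z₀ * x = x * z₀)
    (hf : ∀ x y, f (x * y * z₀) + μ y * f (τ y * x * z₀) = 2 * f x * f y) (hf0 : f ≠ 0) :
    ∃ χ : S → ℂ, (∀ x y, χ (x * y) = χ x * χ y) ∧ χ z₀ ≠ 0 ∧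
      μ z₀ * χ (τ z₀) = χ z₀ ∧ ∀ x, f x = χ z₀ * (χ x + μ x * χ (τ x)) / 2 := by
  obtain ⟨c, hc, hfc⟩ := exists_apply_mul_center_eq_mul hτinv hτ hμ hμτ hz₀ hf hf0
  have hg : ∀ x y, f (x * y) / c + μ y * (f (τ y * x) / c) = 2 * (f x / c) * (f y / c) :=
    fun x y => by
      have h := hf x y
      rw [hfc, hfc] at h
      field_simp
      linear_combination h
  obtain ⟨χ, hχ, hfχ⟩ := exists_mul_of_dAlembert hτinv hτ hμ hμτ (g := fun x => f x / c) hg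
  have h2f : ∀ x, 2 * f x = c * (χ x + μ x * χ (τ x)) := fun x => by
    rw [← hfχ x]
    field_simp
  have hne : ∃ x, χ x ≠ 0 := by
    by_contra! h
    refine hf0 (funext fun x => ?_)
    have := h2f x
    rw [h, h] at this
    simpa using this
  obtain ⟨hα, hβ⟩ := apply_eq_of_add_mul_right_eq hχ (mu_mul_apply_tau_mul hτ hμ hχ) hne
    (exists_mu_mul_apply_tau_ne_zero hτinv hμ hμτ hne) (z := z₀) (c := c) fun x => by
      refine mul_left_cancel₀ hc ?_
      rw [← h2f, ← h2f, hfc]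
      ring
  refine ⟨χ, hχ, hα ▸ hc, hβ.trans hα.symm, fun x => ?_⟩
  rw [hα]
  linear_combination h2f x / 2

theorem kannappan_of_mul (hτinv : Function.Involutive τ)
    (hτ : ∀ x y, τ (x * y) = τ x * τ y) (hμ : ∀ x y, μ (x * y) = μ x * μ y)
    (hμτ : ∀ x, μ (x * τ x) = 1) {χ : S → ℂ} (hχ : ∀ x y, χ (x * y) = χ x * χ y) {z₀ : S}
    (hz₀ : μ z₀ * χ (τ z₀) = χ z₀) {f : S → ℂ}
    (hf : ∀ x, f x = χ z₀ * (χ x + μ x * χ (τ x)) / 2) (x y : S) :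
    f (x * y * z₀) + μ y * f (τ y * x * z₀) = 2 * f x * f y := by
  have hm := mu_mul_mu_tau hμ hμτ y
  simp only [hf, hτ, hμ, hχ, hτinv y]
  linear_combination χ z₀ / 2 * μ x * χ (τ x) * (χ y + μ y * χ (τ y)) * hz₀
    + χ z₀ / 2 * μ x * χ (τ x) * χ y * (μ z₀ * χ (τ z₀)) * hm

end Involution

theorem stmt_11 {S : Type*} [Semigroup S] (τ : S → S)
    (hτinv : ∀ x, τ (τ x) = x)
    (hτ : ∀ x y, τ (x * y) = τ x * τ y)
    (μ : S → ℂ) (hμ : ∀ x y, μ (x * y) = μ x * μ y)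
    (hμτ : ∀ x, μ (x * τ x) = 1)
    (z₀ : S) (hz₀ : ∀ x, z₀ * x = x * z₀)
    (f : S → ℂ) :
    (f ≠ 0 ∧ ∀ x y, f (x * y * z₀) + μ y * f (τ y * x * z₀) = 2 * f x * f y) ↔
    ∃ χ : S → ℂ, (∀ x y, χ (x * y) = χ x * χ y) ∧ χ z₀ ≠ 0 ∧
      μ z₀ * χ (τ z₀) = χ z₀ ∧
      ∀ x, f x = χ z₀ * (χ x + μ x * χ (τ x)) / 2 := by
  constructor
  · rintro ⟨hf0, hf⟩
    exact exists_mul_of_kannappan hτinv hτ hμ hμτ hz₀ hf hf0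
  · rintro ⟨χ, hχ, hχz₀, hz₀χ, hf⟩
    refine ⟨fun h0 => hχz₀ ?_, kannappan_of_mul hτinv hτ hμ hμτ hχ hz₀χ hf⟩
    have h := hf z₀
    rw [hz₀χ, h0, Pi.zero_apply] at h
    exact mul_self_eq_zero.mp (by linear_combination -h)
end

section
/- If f: S → ℂ is a nonzero solution of the Van Vleck-type equation μ(y)f(xτ(y)z₀) − f(xyz₀) = 2f(x)f(y) for all x,y ∈ S, then f(x) = −μ(x)f(τ(x)) for all x, f(z₀) ≠ 0, f(z₀²) = 0, f(xτ(z₀)z₀) = μ(τ(z₀))f(x)f(z₀), f(xz₀²) = −f(z₀)f(x), and μ(x)f(τ(x)z₀) = f(xz₀). -/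
/-!
Substituting `τ y` for `y` and using `μ y μ (τ y) = 1` shows that a nonzero solution is `μ`-odd.
Combining the equation at `(x z₀, y)`, `(x, y z₀)` and `(x τ y, z₀)` gives the identity
`f x f (y z₀) - f (x z₀) f y = μ y f (x τ y) f z₀`, and comparing its instances at `(y z₀, z₀)` and
`(z₀ z₀, y)` gives `f (z₀²) f (y z₀) = c f y` for a constant `c`. So if `f z₀ = 0` or
`f (z₀²) ≠ 0`, the right translate `f (· z₀)` is proportional to `f`. The equation then no longer
involves `z₀`, and evaluating it at `(x, x)` and `(τ x, τ x)` together with `μ`-oddness forces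
`f = 0`. The remaining identities are read off from the equation and the identity above.
-/

namespace VanVleck

variable {S : Type*} [Semigroup S]

def IsMulOrAntiMul (τ : S → S) : Prop :=
  (∀ x y, τ (x * y) = τ x * τ y) ∨ (∀ x y, τ (x * y) = τ y * τ x)

def IsMuOdd (τ : S → S) (μ : S → ℂ) (f : S → ℂ) : Prop :=
  ∀ x, f x = -(μ x * f (τ x))

def IsSolution (τ : S → S) (μ : S → ℂ) (z₀ : S) (f : S → ℂ) : Prop :=
  ∀ x y, μ y * f (x * τ y * z₀) - f (x * y * z₀) = 2 * f x * f y

variable {τ : S → S} {μ f : S → ℂ} {z₀ : S}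

namespace IsMulOrAntiMul

theorem map_mul_self (hτ : IsMulOrAntiMul τ) (x : S) : τ (x * x) = τ x * τ x := by
  rcases hτ with hom | anti
  · exact hom x x
  · exact anti x x

theorem map_commute_of_central (hτ : IsMulOrAntiMul τ) (hinv : ∀ x, τ (τ x) = x)
    (hz : ∀ x, z₀ * x = x * z₀) (x : S) : τ z₀ * x = x * τ z₀ := by
  conv_lhs => rw [← hinv x]
  rcases hτ with hom | anti
  · rw [← hom, hz, hom, hinv]
  · rw [← anti, ← hz, anti, hinv]

theorem map_mul_central (hτ : IsMulOrAntiMul τ) (hinv : ∀ x, τ (τ x) = x)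
    (hz : ∀ x, z₀ * x = x * z₀) (y : S) : τ (y * z₀) = τ y * τ z₀ := by
  rcases hτ with hom | anti
  · exact hom y z₀
  · rw [anti, map_commute_of_central (Or.inr anti) hinv hz]

end IsMulOrAntiMul

namespace IsMuOdd

/-- In the anti-multiplicative case both terms vanish, since `x τ x` and `τ x x` are fixed by `τ`. -/
theorem apply_mul_map_add_apply_map_mul (hodd : IsMuOdd τ μ f) (hτ : IsMulOrAntiMul τ)
    (hinv : ∀ x, τ (τ x) = x) (hμτ : ∀ x, μ (x * τ x) = 1) (x : S) :
    f (x * τ x) + f (τ x * x) = 0 := by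
  have h₁ := hodd (x * τ x)
  have h₂ := hodd (τ x * x)
  have hμτ' := hμτ (τ x)
  rw [hinv] at hμτ'
  rcases hτ with hom | anti
  · rw [hom, hinv, hμτ x] at h₁
    linear_combination h₁
  · rw [anti, hinv, hμτ x] at h₁
    rw [anti, hinv, hμτ'] at h₂
    linear_combination h₁ / 2 + h₂ / 2

theorem eq_zero_of_proportional_equation (hodd : IsMuOdd τ μ f) (hτ : IsMulOrAntiMul τ)
    (hinv : ∀ x, τ (τ x) = x) (hμ : ∀ x y, μ (x * y) = μ x * μ y)
    (hμτ : ∀ x, μ (x * τ x) = 1) (c : ℂ)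
    (hc : ∀ x y, c * (μ y * f (x * τ y) - f (x * y)) = 2 * f x * f y) : f = 0 := by
  funext x
  have hμx : μ x * μ (τ x) = 1 := by rw [← hμ, hμτ]
  have hx := hc x x
  have hτx := hc (τ x) (τ x)
  rw [hinv] at hτx
  have hodd_sq := hodd (x * x)
  rw [hτ.map_mul_self, hμ] at hodd_sq
  have hodd_τ := hodd (τ x)
  rw [hinv] at hodd_τ
  have hsum := hodd.apply_mul_map_add_apply_map_mul hτ hinv hμτ x
  -- The equation at `(x, x)` plus `μ x ^ 2` times the one at `(τ x, τ x)` reads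
  -- `c μ x (f (x τ x) + f (τ x x)) = 4 f x ^ 2`.
  have hsq : f x ^ 2 = 0 := by
    linear_combination (-(1 : ℂ) / 4) * hx - (μ x ^ 2 / 4) * hτx - (c / 4) * hodd_sq
      - (μ x ^ 2 / 2 * (f (τ x) - μ (τ x) * f x)) * hodd_τ + (c * μ x / 4) * hsum
      - (f x ^ 2 / 2 * (μ x * μ (τ x) + 1) - c * μ x * f (τ x * x) / 4) * hμx
  exact pow_eq_zero_iff two_ne_zero |>.mp hsq

end IsMuOdd

theorem mul_central_mul (hz : ∀ x, z₀ * x = x * z₀) (x y : S) :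
    x * z₀ * y = x * y * z₀ := by
  rw [mul_assoc, hz, ← mul_assoc]

namespace IsSolution

theorem isMuOdd (hf : IsSolution τ μ z₀ f) (hinv : ∀ x, τ (τ x) = x)
    (hμτ : ∀ x, μ x * μ (τ x) = 1) (hf0 : f ≠ 0) : IsMuOdd τ μ f := by
  obtain ⟨x₀, hx₀⟩ : ∃ x, f x ≠ 0 := Function.ne_iff.mp hf0
  intro y
  have h₁ := hf x₀ y
  have h₂ := hf x₀ (τ y)
  rw [hinv] at h₂
  have h : 2 * f x₀ * (f y + μ y * f (τ y)) = 0 := by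
    linear_combination -h₁ - μ y * h₂ + f (x₀ * y * z₀) * hμτ y
  have hsum : f y + μ y * f (τ y) = 0 :=
    (mul_eq_zero.mp h).resolve_left (mul_ne_zero two_ne_zero hx₀)
  linear_combination hsum

theorem apply_mul_apply_central_sub (hf : IsSolution τ μ z₀ f) (hτ : IsMulOrAntiMul τ)
    (hinv : ∀ x, τ (τ x) = x) (hμ : ∀ x y, μ (x * y) = μ x * μ y)
    (hz : ∀ x, z₀ * x = x * z₀) (x y : S) :
    f x * f (y * z₀) - f (x * z₀) * f y = μ y * f (x * τ y) * f z₀ := by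
  have hA := hf (x * z₀) y
  have hB := hf x (y * z₀)
  have hC := hf (x * τ y) z₀
  rw [mul_central_mul hz x, mul_central_mul hz x] at hA
  rw [hτ.map_mul_central hinv hz, hμ, ← mul_assoc x y, ← mul_assoc x (τ y)] at hB
  linear_combination (hA + μ y * hC - hB) / 2

theorem apply_central_mul_add (hf : IsSolution τ μ z₀ f) (hτ : IsMulOrAntiMul τ)
    (hinv : ∀ x, τ (τ x) = x) (hμ : ∀ x y, μ (x * y) = μ x * μ y)
    (hz : ∀ x, z₀ * x = x * z₀) (x y : S) :
    f z₀ * f (x * y * z₀) + 2 * f z₀ * f x * f y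
      = f (x * z₀) * f (y * z₀) - f (x * z₀ * z₀) * f y := by
  have h := hf.apply_mul_apply_central_sub hτ hinv hμ hz (x * z₀) y
  rw [mul_central_mul hz x (τ y)] at h
  linear_combination -h - f z₀ * hf x y

theorem apply_central_sq_mul (hf : IsSolution τ μ z₀ f) (hτ : IsMulOrAntiMul τ)
    (hinv : ∀ x, τ (τ x) = x) (hμ : ∀ x y, μ (x * y) = μ x * μ y)
    (hz : ∀ x, z₀ * x = x * z₀) (y : S) :
    f (z₀ * z₀) * f (y * z₀) = 2 * (f z₀ ^ 2 + f (z₀ * z₀ * z₀)) * f y := by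
  have h₁ := hf.apply_central_mul_add hτ hinv hμ hz y z₀
  have h₂ := hf.apply_central_mul_add hτ hinv hμ hz z₀ y
  rw [hz y] at h₂
  linear_combination h₁ - 2 * h₂

theorem eq_zero_of_apply_mul_central_eq (hf : IsSolution τ μ z₀ f) (hodd : IsMuOdd τ μ f)
    (hτ : IsMulOrAntiMul τ) (hinv : ∀ x, τ (τ x) = x) (hμ : ∀ x y, μ (x * y) = μ x * μ y)
    (hμτ : ∀ x, μ (x * τ x) = 1) (c : ℂ) (hc : ∀ u, f (u * z₀) = c * f u) : f = 0 := by
  refine hodd.eq_zero_of_proportional_equation hτ hinv hμ hμτ c fun x y => ?_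
  rw [← hf x y, hc, hc]
  ring

theorem apply_central_ne_zero (hf : IsSolution τ μ z₀ f) (hodd : IsMuOdd τ μ f)
    (hτ : IsMulOrAntiMul τ) (hinv : ∀ x, τ (τ x) = x) (hμ : ∀ x y, μ (x * y) = μ x * μ y)
    (hμτ : ∀ x, μ (x * τ x) = 1) (hz : ∀ x, z₀ * x = x * z₀) (hf0 : f ≠ 0) : f z₀ ≠ 0 := by
  obtain ⟨x₀, hx₀⟩ : ∃ x, f x ≠ 0 := Function.ne_iff.mp hf0
  intro hz0
  refine hf0 (hf.eq_zero_of_apply_mul_central_eq hodd hτ hinv hμ hμτ (f (x₀ * z₀) / f x₀) ?_)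
  intro u
  have h := hf.apply_mul_apply_central_sub hτ hinv hμ hz u x₀
  rw [hz0, mul_zero] at h
  rw [div_mul_eq_mul_div, eq_div_iff hx₀]
  linear_combination -h

theorem apply_central_mul_central_eq_zero (hf : IsSolution τ μ z₀ f) (hodd : IsMuOdd τ μ f)
    (hτ : IsMulOrAntiMul τ) (hinv : ∀ x, τ (τ x) = x) (hμ : ∀ x y, μ (x * y) = μ x * μ y)
    (hμτ : ∀ x, μ (x * τ x) = 1) (hz : ∀ x, z₀ * x = x * z₀) (hf0 : f ≠ 0) :
    f (z₀ * z₀) = 0 := by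
  by_contra hsq
  refine hf0 (hf.eq_zero_of_apply_mul_central_eq hodd hτ hinv hμ hμτ
    (2 * (f z₀ ^ 2 + f (z₀ * z₀ * z₀)) / f (z₀ * z₀)) fun u => ?_)
  rw [div_mul_eq_mul_div, eq_div_iff hsq, ← hf.apply_central_sq_mul hτ hinv hμ hz u, mul_comm]

theorem apply_mul_central_mul_central (hf : IsSolution τ μ z₀ f) (hτ : IsMulOrAntiMul τ)
    (hinv : ∀ x, τ (τ x) = x) (hμ : ∀ x y, μ (x * y) = μ x * μ y)
    (hz : ∀ x, z₀ * x = x * z₀) (hz0 : f z₀ ≠ 0) (hsq : f (z₀ * z₀) = 0) (x : S) :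
    f (x * z₀ * z₀) = -(f z₀ * f x) := by
  have h := hf.apply_central_mul_add hτ hinv hμ hz x z₀
  rw [hsq] at h
  refine mul_left_cancel₀ (mul_ne_zero two_ne_zero hz0) ?_
  linear_combination h

theorem apply_mul_map_central_mul_central (hf : IsSolution τ μ z₀ f) (hτ : IsMulOrAntiMul τ)
    (hinv : ∀ x, τ (τ x) = x) (hμ : ∀ x y, μ (x * y) = μ x * μ y)
    (hμτ : ∀ x, μ (x * τ x) = 1) (hz : ∀ x, z₀ * x = x * z₀) (hz0 : f z₀ ≠ 0)
    (hsq : f (z₀ * z₀) = 0) (x : S) :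
    f (x * τ z₀ * z₀) = μ (τ z₀) * f x * f z₀ := by
  have hμz : μ z₀ * μ (τ z₀) = 1 := by rw [← hμ, hμτ]
  have h := hf x z₀
  rw [hf.apply_mul_central_mul_central hτ hinv hμ hz hz0 hsq] at h
  linear_combination μ (τ z₀) * h - f (x * τ z₀ * z₀) * hμz

theorem mul_apply_map_mul_central (hf : IsSolution τ μ z₀ f) (hodd : IsMuOdd τ μ f)
    (hτ : IsMulOrAntiMul τ) (hinv : ∀ x, τ (τ x) = x) (hμ : ∀ x y, μ (x * y) = μ x * μ y)
    (hμτ : ∀ x, μ (x * τ x) = 1) (hz : ∀ x, z₀ * x = x * z₀) (hz0 : f z₀ ≠ 0)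
    (hsq : f (z₀ * z₀) = 0) (x : S) :
    μ x * f (τ x * z₀) = f (x * z₀) := by
  have hμx : μ x * μ (τ x) = 1 := by rw [← hμ, hμτ]
  have hμz : μ z₀ * μ (τ z₀) = 1 := by rw [← hμ, hμτ]
  have h := hf.apply_mul_apply_central_sub hτ hinv hμ hz x z₀
  rw [hsq] at h
  have hx : f (x * τ z₀) = -(μ (τ z₀) * f (x * z₀)) := by
    refine mul_left_cancel₀ (mul_ne_zero hz0 (left_ne_zero_of_mul_eq_one hμz)) ?_
    linear_combination -h + f z₀ * f (x * z₀) * hμz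
  have hodd_x := hodd (τ x * z₀)
  rw [hτ.map_mul_central hinv hz, hinv, hμ, hx] at hodd_x
  linear_combination μ x * hodd_x + f (x * z₀) * μ z₀ * μ (τ z₀) * hμx + f (x * z₀) * hμz

end IsSolution

end VanVleck

open VanVleck in
theorem stmt_12 {S : Type*} [Semigroup S] (τ : S → S)
    (hτinv : ∀ x, τ (τ x) = x)
    (hτ : (∀ x y, τ (x * y) = τ x * τ y) ∨ (∀ x y, τ (x * y) = τ y * τ x))
    (μ : S → ℂ) (hμ : ∀ x y, μ (x * y) = μ x * μ y)
    (hμτ : ∀ x, μ (x * τ x) = 1)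
    (z₀ : S) (hz₀ : ∀ x, z₀ * x = x * z₀)
    (f : S → ℂ) (hf0 : f ≠ 0) (hf : ∀ x y, μ y * f (x * τ y * z₀) - f (x * y * z₀) = 2 * f x * f y) :
    (∀ x, f x = -(μ x * f (τ x))) ∧ f z₀ ≠ 0 ∧ f (z₀ * z₀) = 0 ∧
    (∀ x, f (x * τ z₀ * z₀) = μ (τ z₀) * f x * f z₀) ∧
    (∀ x, f (x * (z₀ * z₀)) = -(f z₀ * f x)) ∧
    (∀ x, μ x * f (τ x * z₀) = f (x * z₀)) := by
  have hτ : IsMulOrAntiMul τ := hτ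
  have hf : IsSolution τ μ z₀ f := hf
  have hodd := hf.isMuOdd hτinv (fun x => by rw [← hμ, hμτ]) hf0
  have hz0 := hf.apply_central_ne_zero hodd hτ hτinv hμ hμτ hz₀ hf0
  have hsq := hf.apply_central_mul_central_eq_zero hodd hτ hτinv hμ hμτ hz₀ hf0
  refine ⟨hodd, hz0, hsq, hf.apply_mul_map_central_mul_central hτ hτinv hμ hμτ hz₀ hz0 hsq,
    fun x => ?_, hf.mul_apply_map_mul_central hodd hτ hτinv hμ hμτ hz₀ hz0 hsq⟩
  rw [← mul_assoc]
  exact hf.apply_mul_central_mul_central hτ hτinv hμ hz₀ hz0 hsq x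
end

section
/- The nonzero solutions f: S → ℂ of μ(y)f(xτ(y)z₀) − f(xyz₀) = 2f(x)f(y) are exactly the functions f = χ(z₀)·(μ·χ∘τ − χ)/2 where χ: S → ℂ is multiplicative with χ(z₀) ≠ 0 and μ(z₀)χ(τ(z₀)) = −χ(z₀). -/
/-!
Write `a = f z₀` and `g x = f (x * z₀)`. Three instances of the equation combine to
`μ y * f (x * τ y) * a = f x * g y - g x * f y`. If `a = 0`, this makes `g` a multiple of `f`,
and the instances of the resulting equation at `(x, x)` and `(x, τ x)` add up to `4 f(x)² = 0`.
If `a ≠ 0`, one first shows `f (z₀ * z₀) = 0`; then `u = g / a` and `v = -f / c`, where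
`c² = -a`, obey the addition laws of `cosh` and `sinh`, so `χ = u + v` is multiplicative,
`μ · χ ∘ τ = u - v` and `f = -c v = χ z₀ (μ · χ ∘ τ - χ) / 2`. The converse is a computation.
-/

theorem add_apply_mul_of_cosh_sinh_laws {M R : Type*} [Mul M] [CommRing R] {u v : M → R}
    (hu : ∀ x y, u (x * y) = u x * u y + v x * v y)
    (hv : ∀ x y, v (x * y) = v x * u y + u x * v y) (x y : M) :
    (u + v) (x * y) = (u + v) x * (u + v) y := by
  simp only [Pi.add_apply, hu, hv]
  ring

theorem map_mul_of_central_right {S : Type*} [Mul S] {τ : S → S}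
    (hτ : (∀ x y, τ (x * y) = τ x * τ y) ∨ (∀ x y, τ (x * y) = τ y * τ x))
    {z₀ : S} (hz₀ : ∀ x, z₀ * x = x * z₀) (y : S) : τ (y * z₀) = τ y * τ z₀ := by
  rcases hτ with h | h
  · exact h y z₀
  · rw [← hz₀, h]

theorem comp_map_mul_of_mul_or_anti {S M : Type*} [Mul S] [CommMagma M] {τ : S → S}
    (hτ : (∀ x y, τ (x * y) = τ x * τ y) ∨ (∀ x y, τ (x * y) = τ y * τ x))
    {χ : S → M} (hχ : ∀ x y, χ (x * y) = χ x * χ y) (x y : S) :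
    χ (τ (x * y)) = χ (τ x) * χ (τ y) := by
  rcases hτ with h | h
  · rw [h, hχ]
  · rw [h, hχ, mul_comm]

theorem mul_right_comm_of_central_s15 {S : Type*} [Semigroup S] {z₀ : S}
    (hz₀ : ∀ x, z₀ * x = x * z₀) (x y : S) : x * z₀ * y = x * y * z₀ := by
  rw [mul_assoc, hz₀, ← mul_assoc]

section

variable {S K : Type*} [Semigroup S] [Field K] [CharZero K]

def VanVleckEq (τ : S → S) (μ : S → K) (z₀ : S) (f : S → K) : Prop :=
  ∀ x y, μ y * f (x * τ y * z₀) - f (x * y * z₀) = 2 * f x * f y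

variable {τ : S → S} {μ : S → K} {z₀ : S} {f : S → K}

namespace VanVleckEq

variable (hf : VanVleckEq τ μ z₀ f) (hμ : ∀ x y, μ (x * y) = μ x * μ y)
  (hτz₀ : ∀ y, τ (y * z₀) = τ y * τ z₀) (hz₀ : ∀ x, z₀ * x = x * z₀)
include hf hμ hτz₀ hz₀

theorem mul_apply_mul_tau (x y : S) :
    μ y * f (x * τ y) * f z₀ = f x * f (y * z₀) - f (x * z₀) * f y := by
  have hA := hf x (y * z₀)
  have hB := hf (x * z₀) y
  have hC := hf (x * τ y) z₀
  rw [hτz₀, hμ, ← mul_assoc x, ← mul_assoc x] at hA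
  rw [mul_right_comm_of_central_s15 hz₀ x (τ y), mul_right_comm_of_central_s15 hz₀ x y] at hB
  linear_combination (1 / 2) * hA - (1 / 2) * hB - (μ y / 2) * hC

theorem exists_apply_mul_center_eq_mul_of_apply_center_eq_zero (ha : f z₀ = 0) {x₀ : S}
    (hx₀ : f x₀ ≠ 0) : ∃ c, ∀ y, f (y * z₀) = c * f y := by
  refine ⟨f (x₀ * z₀) / f x₀, fun y ↦ ?_⟩
  have h := hf.mul_apply_mul_tau hμ hτz₀ hz₀ x₀ y
  rw [ha, mul_zero] at h
  rw [div_mul_eq_mul_div, eq_div_iff hx₀]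
  linear_combination -h

theorem apply_center_ne_zero (hμτ : ∀ x, μ x * μ (τ x) = 1) (hτinv : ∀ x, τ (τ x) = x)
    (hf0 : f ≠ 0) : f z₀ ≠ 0 := by
  intro ha
  obtain ⟨x₀, hx₀⟩ := Function.ne_iff.mp hf0
  obtain ⟨c, hscale⟩ :=
    hf.exists_apply_mul_center_eq_mul_of_apply_center_eq_zero hμ hτz₀ hz₀ ha hx₀
  have hE : ∀ x y, c * (μ y * f (x * τ y) - f (x * y)) = 2 * f x * f y := by
    intro x y
    rw [← hf x y, hscale (x * τ y), hscale (x * y)]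
    ring
  have hc : c ≠ 0 := by
    intro hc
    have h := hE x₀ x₀
    rw [hc, zero_mul] at h
    exact hx₀ (mul_self_eq_zero.mp (by linear_combination -h / 2))
  have heven : ∀ y, μ y * f (τ y) = f y := by
    intro y
    have h := hE z₀ y
    rw [hz₀ (τ y), hz₀ y, hscale (τ y), hscale y, ha] at h
    have h' : c * c * (μ y * f (τ y) - f y) = 0 := by linear_combination h
    linear_combination (mul_eq_zero.mp h').resolve_left (mul_ne_zero hc hc)
  -- `hE x₀ (τ x₀)`, multiplied by `μ x₀`, is `hE x₀ x₀` with the sign of its left side reversed.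
  have hsq : f x₀ * f x₀ = 0 := by
    have h := hE x₀ (τ x₀)
    rw [hτinv] at h
    linear_combination (-1 / 4) * hE x₀ x₀ - (μ x₀ / 4) * h
      + (c * f (x₀ * x₀) / 4) * hμτ x₀ - (f x₀ / 2) * heven x₀
  exact hx₀ (mul_self_eq_zero.mp hsq)

theorem apply_center_mul_apply_mul_mul_center (x y : S) :
    f z₀ * f (x * y * z₀) + 2 * f z₀ * f x * f y =
      f (x * z₀) * f (y * z₀) - f (x * z₀ * z₀) * f y := by
  have h := hf.mul_apply_mul_tau hμ hτz₀ hz₀ (x * z₀) y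
  rw [mul_right_comm_of_central_s15 hz₀] at h
  linear_combination h - f z₀ * hf x y

theorem apply_center_mul_center_eq_zero (hμτ : ∀ x, μ x * μ (τ x) = 1)
    (hτinv : ∀ x, τ (τ x) = x) (ha : f z₀ ≠ 0) : f (z₀ * z₀) = 0 := by
  have h4 := hf.apply_center_mul_apply_mul_mul_center hμ hτz₀ hz₀
  -- With `b = f (z₀ * z₀)`, the instances `(z₀, y)`, `(y, z₀)`, `(z₀, z₀)` of `h4` give
  -- `b * (f z₀ * f (y * z₀) - b * f y) = 0`; at `y = τ z₀` the bracket is `μ (τ z₀) * f z₀ * b`.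
  have hprop : ∀ y, f (z₀ * z₀) * (f z₀ * f (y * z₀) - f (z₀ * z₀) * f y) = 0 := by
    intro y
    have h := h4 z₀ y
    rw [hz₀ y] at h
    linear_combination f z₀ * (h4 y z₀ - 2 * h) + f y * h4 z₀ z₀
  have hcross := hf.mul_apply_mul_tau hμ hτz₀ hz₀ z₀ (τ z₀)
  rw [hτinv] at hcross
  have hμ0 : μ (τ z₀) ≠ 0 := right_ne_zero_of_mul_eq_one (hμτ z₀)
  have h : μ (τ z₀) * f z₀ * f (z₀ * z₀) ^ 2 = 0 := by
    linear_combination f (z₀ * z₀) * hcross + hprop (τ z₀)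
  simpa [hμ0, ha] using h

section CenterSquare

variable (ha : f z₀ ≠ 0) (hb : f (z₀ * z₀) = 0)
include ha hb

theorem apply_mul_center_mul_center (x : S) : f (x * z₀ * z₀) = -f z₀ * f x := by
  have h := hf.apply_center_mul_apply_mul_mul_center hμ hτz₀ hz₀ x z₀
  rw [hb] at h
  refine mul_left_cancel₀ (mul_ne_zero two_ne_zero ha) ?_
  linear_combination h

theorem mul_apply_tau_mul_center (y : S) : μ y * f (τ y * z₀) = f (y * z₀) := by
  have h := hf.mul_apply_mul_tau hμ hτz₀ hz₀ z₀ y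
  rw [hz₀, hb] at h
  refine mul_right_cancel₀ ha ?_
  linear_combination h

theorem mul_apply_tau (y : S) : μ y * f (τ y) = -f y := by
  have h := hf z₀ y
  rw [hz₀ (τ y), hz₀ y, hf.apply_mul_center_mul_center hμ hτz₀ hz₀ ha hb,
    hf.apply_mul_center_mul_center hμ hτz₀ hz₀ ha hb] at h
  refine mul_right_cancel₀ ha ?_
  linear_combination -h

theorem apply_center_mul_apply_mul (hμτ : ∀ x, μ x * μ (τ x) = 1) (hτinv : ∀ x, τ (τ x) = x)
    (x y : S) : f z₀ * f (x * y) = f x * f (y * z₀) + f (x * z₀) * f y := by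
  have h := hf.mul_apply_mul_tau hμ hτz₀ hz₀ x (τ y)
  rw [hτinv] at h
  linear_combination μ y * h - f (x * y) * f z₀ * hμτ y
    + f x * hf.mul_apply_tau_mul_center hμ hτz₀ hz₀ ha hb y
    - f (x * z₀) * hf.mul_apply_tau hμ hτz₀ hz₀ ha hb y

end CenterSquare

theorem exists_character [IsAlgClosed K] (hμτ : ∀ x, μ x * μ (τ x) = 1)
    (hτinv : ∀ x, τ (τ x) = x) (ha : f z₀ ≠ 0) :
    ∃ χ : S → K, (∀ x y, χ (x * y) = χ x * χ y) ∧ χ z₀ ≠ 0 ∧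
      μ z₀ * χ (τ z₀) = -χ z₀ ∧ ∀ x, f x = χ z₀ * (μ x * χ (τ x) - χ x) / 2 := by
  have hb := hf.apply_center_mul_center_eq_zero hμ hτz₀ hz₀ hμτ hτinv ha
  obtain ⟨c, hc⟩ := IsAlgClosed.exists_eq_mul_self (-f z₀)
  have hc0 : c ≠ 0 := by
    rintro rfl
    exact ha (neg_eq_zero.mp (by simpa using hc))
  have hfz : f z₀ = -(c * c) := by linear_combination -hc
  set u : S → K := fun x ↦ f (x * z₀) / f z₀
  set v : S → K := fun x ↦ -f x / c
  have hu : ∀ x y, u (x * y) = u x * u y + v x * v y := by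
    intro x y
    have h := hf.apply_center_mul_apply_mul_mul_center hμ hτz₀ hz₀ x y
    rw [hf.apply_mul_center_mul_center hμ hτz₀ hz₀ ha hb] at h
    simp only [u, v]
    rw [hfz] at h ⊢
    field_simp
    linear_combination h
  have hv : ∀ x y, v (x * y) = v x * u y + u x * v y := by
    intro x y
    have h := hf.apply_center_mul_apply_mul hμ hτz₀ hz₀ ha hb hμτ hτinv x y
    simp only [u, v]
    rw [hfz] at h ⊢
    field_simp
    linear_combination h
  have huτ : ∀ x, μ x * u (τ x) = u x := fun x ↦ by
    simp only [u, ← mul_div_assoc, hf.mul_apply_tau_mul_center hμ hτz₀ hz₀ ha hb]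
  have hvτ : ∀ x, μ x * v (τ x) = -v x := fun x ↦ by
    simp only [v, ← mul_div_assoc, mul_neg, hf.mul_apply_tau hμ hτz₀ hz₀ ha hb, neg_div]
  have hχτ : ∀ x, μ x * (u + v) (τ x) = u x - v x := fun x ↦ by
    rw [Pi.add_apply, mul_add, huτ, hvτ, sub_eq_add_neg]
  have hu0 : u z₀ = 0 := by simp only [u, hb, zero_div]
  have hv0 : v z₀ = c := by
    simp only [v, hfz]
    field_simp
  refine ⟨u + v, add_apply_mul_of_cosh_sinh_laws hu hv, ?_, ?_, fun x ↦ ?_⟩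
  · rwa [Pi.add_apply, hu0, hv0, zero_add]
  · rw [hχτ, Pi.add_apply, hu0, hv0]
    ring
  · rw [hχτ, Pi.add_apply, Pi.add_apply, hu0, hv0]
    simp only [v]
    field_simp
    ring

end VanVleckEq

theorem vanVleckEq_of_map_mul {χ ψ : S → K} (hχ : ∀ x y, χ (x * y) = χ x * χ y)
    (hψ : ∀ x y, ψ (x * y) = ψ x * ψ y) (hψz₀ : ψ z₀ = -χ z₀)
    (hψτ : ∀ y, μ y * ψ (τ y) = χ y) (hχτ : ∀ y, μ y * χ (τ y) = ψ y) :
    VanVleckEq τ μ z₀ (fun x ↦ χ z₀ * (ψ x - χ x) / 2) := by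
  intro x y
  simp only [hχ, hψ, hψz₀]
  linear_combination (-(χ z₀ ^ 2 / 2) * ψ x) * hψτ y - (χ z₀ ^ 2 / 2 * χ x) * hχτ y

theorem vanVleckEq_of_character
    (hτ : (∀ x y, τ (x * y) = τ x * τ y) ∨ (∀ x y, τ (x * y) = τ y * τ x))
    (hτinv : ∀ x, τ (τ x) = x) (hμ : ∀ x y, μ (x * y) = μ x * μ y)
    (hμτ : ∀ x, μ x * μ (τ x) = 1) {χ : S → K} (hχ : ∀ x y, χ (x * y) = χ x * χ y)
    (hχz₀ : μ z₀ * χ (τ z₀) = -χ z₀) :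
    VanVleckEq τ μ z₀ (fun x ↦ χ z₀ * (μ x * χ (τ x) - χ x) / 2) := by
  refine vanVleckEq_of_map_mul (ψ := fun x ↦ μ x * χ (τ x)) hχ (fun x y ↦ ?_) hχz₀
    (fun y ↦ ?_) fun _ ↦ rfl
  · rw [hμ, comp_map_mul_of_mul_or_anti hτ hχ]
    ring
  · rw [hτinv, ← mul_assoc, hμτ, one_mul]

end

theorem stmt_15 {S : Type*} [Semigroup S] (τ : S → S)
    (hτinv : ∀ x, τ (τ x) = x)
    (hτ : (∀ x y, τ (x * y) = τ x * τ y) ∨ (∀ x y, τ (x * y) = τ y * τ x))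
    (μ : S → ℂ) (hμ : ∀ x y, μ (x * y) = μ x * μ y)
    (hμτ : ∀ x, μ (x * τ x) = 1)
    (z₀ : S) (hz₀ : ∀ x, z₀ * x = x * z₀)
    (f : S → ℂ) :
    (f ≠ 0 ∧ ∀ x y, μ y * f (x * τ y * z₀) - f (x * y * z₀) = 2 * f x * f y) ↔
    ∃ χ : S → ℂ, (∀ x y, χ (x * y) = χ x * χ y) ∧ χ z₀ ≠ 0 ∧
      μ z₀ * χ (τ z₀) = -χ z₀ ∧
      ∀ x, f x = χ z₀ * (μ x * χ (τ x) - χ x) / 2 := by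
  have hμτ' : ∀ x, μ x * μ (τ x) = 1 := fun x ↦ hμ x (τ x) ▸ hμτ x
  have hτz₀ := map_mul_of_central_right hτ hz₀
  constructor
  · rintro ⟨hf0, hf⟩
    exact VanVleckEq.exists_character hf hμ hτz₀ hz₀ hμτ' hτinv
      (VanVleckEq.apply_center_ne_zero hf hμ hτz₀ hz₀ hμτ' hτinv hf0)
  · rintro ⟨χ, hχ, hχ0, hχz₀, hf⟩
    obtain rfl : f = fun x ↦ χ z₀ * (μ x * χ (τ x) - χ x) / 2 := funext hf
    refine ⟨fun h0 ↦ hχ0 ?_, vanVleckEq_of_character hτ hτinv hμ hμτ' hχ hχz₀⟩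
    have h := congrFun h0 z₀
    simp only [hχz₀, Pi.zero_apply] at h
    exact pow_eq_zero_iff two_ne_zero |>.mp (by linear_combination -h)
end

section
/- If f: S → ℂ is a nonzero solution of the variant Van Vleck equation μ(y)f(τ(y)xz₀) − f(xyz₀) = 2f(x)f(y) for all x,y ∈ S, then f(z₀) ≠ 0. -/
/-!
Suppose `f z₀ = 0`. Substituting `x * z₀` and `y * z₀` into the equation shows
`f (x * z₀) * f y = f x * f (y * z₀)`, so right multiplication by `z₀` acts on `f` as a scalar
`c`, which is nonzero as soon as `f ≠ 0`. Putting `x = z₀` then gives `μ y * f (τ y) = f y`,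
and the equation becomes `c * (μ y * f (τ y * x) - f (x * y)) = 2 * f x * f y`. Evaluating this
at `(a, τ a)` and at `(τ a, τ a)` produces two expressions for `2 * f a ^ 2` whose left-hand
sides cancel, so `f a = 0` for every `a`.
-/

section VariantVanVleck

variable {S : Type*} [Semigroup S] {τ : S → S} {μ : S → ℂ} {z₀ : S} {f : S → ℂ}

def IsVariantVanVleckSolution (τ : S → S) (μ : S → ℂ) (z₀ : S) (f : S → ℂ) : Prop :=
  ∀ x y, μ y * f (τ y * x * z₀) - f (x * y * z₀) = 2 * f x * f y

lemma apply_mul_of_commute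
    (hτ : (∀ x y, τ (x * y) = τ x * τ y) ∨ (∀ x y, τ (x * y) = τ y * τ x))
    {x y : S} (hxy : Commute x y) : τ (x * y) = τ y * τ x := by
  rcases hτ with hom | antihom
  · rw [hxy.eq, hom]
  · exact antihom x y

lemma exists_eq_const_mul_of_mul_comm {α K : Type*} [Field K] {g h : α → K}
    (hgh : ∀ x y, g x * h y = h x * g y) {a : α} (ha : h a ≠ 0) :
    ∃ c, ∀ x, g x = c * h x :=
  ⟨g a / h a, fun x => by rw [div_mul_eq_mul_div, eq_div_iff ha, mul_comm, hgh]⟩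

namespace IsVariantVanVleckSolution

lemma mul_apply_mul_center_eq (hf : IsVariantVanVleckSolution τ μ z₀ f)
    (hμ : ∀ x y, μ (x * y) = μ x * μ y) (hz₀ : ∀ x, Commute z₀ x)
    (hτz : ∀ y, τ (y * z₀) = τ z₀ * τ y) (hfz : f z₀ = 0) (x y : S) :
    f (x * z₀) * f y = f x * f (y * z₀) := by
  have hz₀z₀ (w : S) : μ z₀ * f (τ z₀ * w * z₀) = f (w * z₀ * z₀) := by
    linear_combination hf w z₀ + 2 * f w * hfz
  have h₁ := hf (x * z₀) y
  have h₂ := hf x (y * z₀)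
  have h₃ := hz₀z₀ (τ y * x)
  rw [hτz, hμ] at h₂
  simp only [mul_assoc, (hz₀ _).eq] at h₁ h₂ h₃
  linear_combination (h₂ - h₁ - μ y * h₃) / 2

lemma const_ne_zero (hf : IsVariantVanVleckSolution τ μ z₀ f) {c : ℂ}
    (hc : ∀ x, f (x * z₀) = c * f x) {a : S} (ha : f a ≠ 0) : c ≠ 0 := by
  rintro rfl
  have h := hf a a
  simp only [hc, zero_mul, sub_zero] at h
  exact ha (mul_self_eq_zero.mp (by linear_combination -h / 2))

lemma mul_apply_map_eq (hf : IsVariantVanVleckSolution τ μ z₀ f) (hz₀ : ∀ x, Commute z₀ x)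
    (hfz : f z₀ = 0) {c : ℂ} (hc : ∀ x, f (x * z₀) = c * f x) (hc₀ : c ≠ 0) (y : S) :
    μ y * f (τ y) = f y := by
  have h := hf z₀ y
  simp only [(hz₀ _).eq, hc, hfz] at h
  exact mul_left_cancel₀ (mul_ne_zero hc₀ hc₀) (by linear_combination h)

lemma const_mul_eq (hf : IsVariantVanVleckSolution τ μ z₀ f) {c : ℂ}
    (hc : ∀ x, f (x * z₀) = c * f x) (x y : S) :
    c * (μ y * f (τ y * x) - f (x * y)) = 2 * f x * f y := by
  have h := hf x y
  rw [hc, hc] at h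
  linear_combination h

end IsVariantVanVleckSolution

lemma eq_zero_of_const_mul_eq (hτinv : ∀ x, τ (τ x) = x) (hμ : ∀ x y, μ (x * y) = μ x * μ y)
    (hμτ : ∀ x, μ (x * τ x) = 1) {c : ℂ}
    (hf : ∀ x y, c * (μ y * f (τ y * x) - f (x * y)) = 2 * f x * f y)
    (hfτ : ∀ y, μ y * f (τ y) = f y) {a : S} (hτa : τ (a * a) = τ a * τ a) : f a = 0 := by
  have h₁ := hf a (τ a)
  have h₂ := hf (τ a) (τ a)
  have hμa := hμτ a
  have hfaa := hfτ (a * a)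
  rw [hτinv] at h₁
  rw [hτinv, ← hτa] at h₂
  rw [hμ] at hμa hfaa
  refine pow_eq_zero_iff (n := 2) two_ne_zero |>.mp ?_
  linear_combination (μ a * h₁ + μ a ^ 2 * h₂ - c * (f (a * a) + μ a * f (a * τ a)) * hμa
    + c * hfaa + 2 * (μ a * f (τ a) + 2 * f a) * hfτ a) / (-4)

end VariantVanVleck

theorem stmt_16 {S : Type*} [Semigroup S] (τ : S → S)
    (hτinv : ∀ x, τ (τ x) = x)
    (hτ : (∀ x y, τ (x * y) = τ x * τ y) ∨ (∀ x y, τ (x * y) = τ y * τ x))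
    (μ : S → ℂ) (hμ : ∀ x y, μ (x * y) = μ x * μ y)
    (hμτ : ∀ x, μ (x * τ x) = 1)
    (z₀ : S) (hz₀ : ∀ x, z₀ * x = x * z₀)
    (f : S → ℂ) (hf0 : f ≠ 0) (hf : ∀ x y, μ y * f (τ y * x * z₀) - f (x * y * z₀) = 2 * f x * f y) :
    f z₀ ≠ 0 := by
  intro hfz
  have hf : IsVariantVanVleckSolution τ μ z₀ f := hf
  obtain ⟨a, ha⟩ := Function.ne_iff.mp hf0
  obtain ⟨c, hc⟩ := exists_eq_const_mul_of_mul_comm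
    (hf.mul_apply_mul_center_eq hμ hz₀ (fun y => apply_mul_of_commute hτ (hz₀ y).symm) hfz) ha
  have hfτ := hf.mul_apply_map_eq hz₀ hfz hc (hf.const_ne_zero hc ha)
  exact ha (eq_zero_of_const_mul_eq hτinv hμ hμτ (hf.const_mul_eq hc) hfτ
    (apply_mul_of_commute hτ (Commute.refl a)))
end

section
/- If f: S → ℂ is a nonzero solution of μ(y)f(τ(y)xz₀) − f(xyz₀) = 2f(x)f(y) for all x,y ∈ S, then f(x) = −μ(x)f(τ(x)), μ(y)f(τ(y)x) = −μ(x)f(τ(x)y), f(xτ(z₀)z₀) = μ(τ(z₀))f(z₀)f(x), f(xz₀²) = −f(z₀)f(x), μ(x)f(τ(x)z₀) = f(xz₀), and f(z₀²) = f(z₀τ(z₀)) = 0. -/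
/-!
Everything rests on the identity
  `f x * f (y * c) = f (x * c) * f y + μ y * f (τ y * x) * f c`   for central `c`,
a combination of the equation at `(x, y c)`, `(τ y x, c)` and `(x c, y)`. Since `τ c` is central
too, `τ (y c) = τ c τ y` whether `τ` is a homomorphism or an anti-homomorphism, so no case split
is needed beyond that. Oddness holds because the equation at `(x, x)`, `(x, τ x)`, `(τ x, x)`,
`(τ x, τ x)` sums to `(f x + μ x f (τ x))² = 0`. With `c = z₀` the identity forces `f z₀ ≠ 0`
and, symmetrised in `x, y`, the antisymmetry of `μ y f (τ y x)`. With `c = τ z₀ z₀`, where `f`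
vanishes, it makes `f (· τ z₀ z₀)`, hence `f (· z₀²)`, a multiple of `f`; the equation at
`(z₀, z₀)` and oddness at `z₀` pin the multiple down to `-f z₀`. Finally the identity with
`c = z₀` at `(z₀², z₀)` collapses to `f (z₀²)² = 0`.
-/

section

variable {S : Type*} [Semigroup S] {τ : S → S}

theorem map_mem_center_of_involutive (hτinv : Function.Involutive τ)
    (hτ : (∀ x y, τ (x * y) = τ x * τ y) ∨ (∀ x y, τ (x * y) = τ y * τ x))
    {c : S} (hc : c ∈ Set.center S) : τ c ∈ Set.center S := by
  rw [Semigroup.mem_center_iff] at hc ⊢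
  intro x
  obtain ⟨y, rfl⟩ := hτinv.surjective x
  rcases hτ with hτ | hτ <;> simp only [← hτ, hc]

theorem map_mul_of_mem_center (hτinv : Function.Involutive τ)
    (hτ : (∀ x y, τ (x * y) = τ x * τ y) ∨ (∀ x y, τ (x * y) = τ y * τ x))
    {c : S} (hc : c ∈ Set.center S) (y : S) : τ (y * c) = τ c * τ y := by
  rcases hτ with hhom | hanti
  · rw [hhom, Semigroup.mem_center_iff.mp (map_mem_center_of_involutive hτinv (.inl hhom) hc)]
  · exact hanti y c

theorem exists_forall_eq_mul_of_mul_eq_mul {α K : Type*} [Field K] {f g : α → K} {a : α}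
    (ha : f a ≠ 0) (h : ∀ y, f a * g y = g a * f y) : ∃ k, ∀ y, g y = k * f y :=
  ⟨g a / f a, fun y => by rw [div_mul_eq_mul_div, eq_div_iff ha, mul_comm, h]⟩

def IsVanVleckSolution (τ : S → S) (μ : S → ℂ) (z₀ : S) (f : S → ℂ) : Prop :=
  ∀ x y, μ y * f (τ y * x * z₀) - f (x * y * z₀) = 2 * f x * f y

namespace IsVanVleckSolution

variable {μ : S → ℂ} {z₀ : S} {f : S → ℂ}

theorem odd (hf : IsVanVleckSolution τ μ z₀ f) (hτinv : Function.Involutive τ)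
    (hμτ : ∀ x, μ x * μ (τ x) = 1) (x : S) : f x = -(μ x * f (τ x)) := by
  have hsq : (f x + μ x * f (τ x)) ^ 2 = 0 := by
    have h₁ := hf (τ x) (τ x)
    have h₂ := hf x (τ x)
    rw [hτinv] at h₁ h₂
    linear_combination (-(hf x x + μ x * h₂ + μ x * hf (τ x) x + μ x ^ 2 * h₁)) / 2
      + (f (x * x * z₀) + μ x * f (x * τ x * z₀)) / 2 * hμτ x
  linear_combination pow_eq_zero_iff two_ne_zero |>.mp hsq

theorem apply_mul_apply_mul_of_mem_center (hf : IsVanVleckSolution τ μ z₀ f)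
    (hτinv : Function.Involutive τ)
    (hτ : (∀ x y, τ (x * y) = τ x * τ y) ∨ (∀ x y, τ (x * y) = τ y * τ x))
    (hμ : ∀ x y, μ (x * y) = μ x * μ y) {c : S} (hc : c ∈ Set.center S) (x y : S) :
    f x * f (y * c) = f (x * c) * f y + μ y * f (τ y * x) * f c := by
  have e₁ := hf x (y * c)
  have e₂ := hf (τ y * x) c
  have e₃ := hf (x * c) y
  rw [map_mul_of_mem_center hτinv hτ hc, hμ] at e₁
  rw [mul_assoc x c y, ← Semigroup.mem_center_iff.mp hc y] at e₃
  simp only [mul_assoc] at e₁ e₂ e₃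
  linear_combination (-e₁ + μ y * e₂ + e₃) / 2

theorem apply_ne_zero (hf : IsVanVleckSolution τ μ z₀ f) (hτinv : Function.Involutive τ)
    (hτ : (∀ x y, τ (x * y) = τ x * τ y) ∨ (∀ x y, τ (x * y) = τ y * τ x))
    (hμ : ∀ x y, μ (x * y) = μ x * μ y) (hμτ : ∀ x, μ x * μ (τ x) = 1)
    (hz₀ : z₀ ∈ Set.center S) (hf0 : f ≠ 0) : f z₀ ≠ 0 := by
  intro h0
  obtain ⟨a, ha⟩ := Function.ne_iff.mp hf0
  obtain ⟨k, hk⟩ : ∃ k, ∀ y, f (y * z₀) = k * f y :=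
    exists_forall_eq_mul_of_mul_eq_mul ha fun y => by
      simpa [h0] using hf.apply_mul_apply_mul_of_mem_center hτinv hτ hμ hz₀ a y
  have hk0 : k = 0 := by
    have e := hf z₀ a
    rw [← Semigroup.mem_center_iff.mp hz₀ a] at e
    simp only [hk, h0] at e
    have : k ^ 2 * f a = 0 := by linear_combination (-e + k ^ 2 * hf.odd hτinv hμτ a) / 2
    exact pow_eq_zero_iff two_ne_zero |>.mp ((mul_eq_zero.mp this).resolve_right ha)
  have e := hf a a
  simp only [hk, hk0] at e
  exact ha (mul_self_eq_zero.mp (by linear_combination -e / 2))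

theorem mul_apply_map_mul_eq_neg (hf : IsVanVleckSolution τ μ z₀ f)
    (hτinv : Function.Involutive τ)
    (hτ : (∀ x y, τ (x * y) = τ x * τ y) ∨ (∀ x y, τ (x * y) = τ y * τ x))
    (hμ : ∀ x y, μ (x * y) = μ x * μ y) {c : S} (hc : c ∈ Set.center S) (hfc : f c ≠ 0)
    (x y : S) : μ y * f (τ y * x) = -(μ x * f (τ x * y)) := by
  have h := hf.apply_mul_apply_mul_of_mem_center hτinv hτ hμ hc
  have : (μ y * f (τ y * x) + μ x * f (τ x * y)) * f c = 0 := by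
    linear_combination -(h x y + h y x)
  exact eq_neg_of_add_eq_zero_left ((mul_eq_zero.mp this).resolve_right hfc)

theorem apply_map_mul_self_eq_zero (hf : IsVanVleckSolution τ μ z₀ f)
    (hτinv : Function.Involutive τ)
    (hτ : (∀ x y, τ (x * y) = τ x * τ y) ∨ (∀ x y, τ (x * y) = τ y * τ x))
    (hμ : ∀ x y, μ (x * y) = μ x * μ y) (hμτ : ∀ x, μ x * μ (τ x) = 1)
    {c : S} (hc : c ∈ Set.center S) (hfc : f c ≠ 0) : f (τ c * c) = 0 := by
  have hV := hf.apply_mul_apply_mul_of_mem_center hτinv hτ hμ hc (τ c) c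
  have hA := hf.mul_apply_map_mul_eq_neg hτinv hτ hμ hc hfc (τ c) c
  have hO := hf.odd hτinv hμτ (τ c)
  rw [hτinv] at hA hO
  have : f (τ c * c) * f c = 0 := by
    linear_combination -hV - f c * hA + f (c * c) * hO
  exact (mul_eq_zero.mp this).resolve_right hfc

theorem apply_mul_mul_self (hf : IsVanVleckSolution τ μ z₀ f) (hτinv : Function.Involutive τ)
    (hτ : (∀ x y, τ (x * y) = τ x * τ y) ∨ (∀ x y, τ (x * y) = τ y * τ x))
    (hμ : ∀ x y, μ (x * y) = μ x * μ y) (hμτ : ∀ x, μ x * μ (τ x) = 1)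
    (hz₀ : z₀ ∈ Set.center S) (hfz₀ : f z₀ ≠ 0) (x : S) :
    f (x * (z₀ * z₀)) = -(f z₀ * f x) := by
  have hτz₀ := map_mem_center_of_involutive hτinv hτ hz₀
  obtain ⟨ρ, hρ⟩ : ∃ ρ, ∀ y, f (y * (τ z₀ * z₀)) = ρ * f y :=
    exists_forall_eq_mul_of_mul_eq_mul hfz₀ fun y => by
      simpa [hf.apply_map_mul_self_eq_zero hτinv hτ hμ hμτ hz₀ hfz₀] using
        hf.apply_mul_apply_mul_of_mem_center hτinv hτ hμ (Set.mul_mem_center hτz₀ hz₀) z₀ y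
  obtain ⟨κ, hκ⟩ : ∃ κ, ∀ y, f (y * (z₀ * z₀)) = κ * f y := by
    refine ⟨μ z₀ * ρ - 2 * f z₀, fun y => ?_⟩
    have e := hf y z₀
    rw [← Semigroup.mem_center_iff.mp hτz₀ y, mul_assoc y, mul_assoc y, hρ] at e
    linear_combination -e
  have e := hf z₀ z₀
  rw [mul_assoc, mul_assoc, hκ, hκ] at e
  have : (κ + f z₀) * f z₀ = 0 := by
    linear_combination (-e + κ * hf.odd hτinv hμτ z₀) / 2
  rw [hκ, eq_neg_of_add_eq_zero_left ((mul_eq_zero.mp this).resolve_right hfz₀), neg_mul]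

theorem apply_mul_map_mul (hf : IsVanVleckSolution τ μ z₀ f) (hτinv : Function.Involutive τ)
    (hτ : (∀ x y, τ (x * y) = τ x * τ y) ∨ (∀ x y, τ (x * y) = τ y * τ x))
    (hμ : ∀ x y, μ (x * y) = μ x * μ y) (hμτ : ∀ x, μ x * μ (τ x) = 1)
    (hz₀ : z₀ ∈ Set.center S) (hfz₀ : f z₀ ≠ 0) (x : S) :
    f (x * τ z₀ * z₀) = μ (τ z₀) * f z₀ * f x := by
  have e := hf x z₀
  rw [← Semigroup.mem_center_iff.mp (map_mem_center_of_involutive hτinv hτ hz₀) x,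
    mul_assoc x z₀ z₀, hf.apply_mul_mul_self hτinv hτ hμ hμτ hz₀ hfz₀] at e
  linear_combination μ (τ z₀) * e - f (x * τ z₀ * z₀) * hμτ z₀

theorem apply_mul_self_eq_zero (hf : IsVanVleckSolution τ μ z₀ f) (hτinv : Function.Involutive τ)
    (hτ : (∀ x y, τ (x * y) = τ x * τ y) ∨ (∀ x y, τ (x * y) = τ y * τ x))
    (hμ : ∀ x y, μ (x * y) = μ x * μ y) (hμτ : ∀ x, μ x * μ (τ x) = 1)
    (hz₀ : z₀ ∈ Set.center S) (hfz₀ : f z₀ ≠ 0) : f (z₀ * z₀) = 0 := by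
  have hV := hf.apply_mul_apply_mul_of_mem_center hτinv hτ hμ hz₀ (z₀ * z₀) z₀
  rw [← mul_assoc, Semigroup.mem_center_iff.mp hz₀ (τ z₀),
    hf.apply_mul_map_mul hτinv hτ hμ hμτ hz₀ hfz₀, mul_assoc z₀ z₀ z₀,
    hf.apply_mul_mul_self hτinv hτ hμ hμτ hz₀ hfz₀] at hV
  exact pow_eq_zero_iff two_ne_zero |>.mp <| by
    linear_combination hV + f z₀ ^ 3 * hμτ z₀

theorem mul_apply_map_mul_eq_apply_mul (hf : IsVanVleckSolution τ μ z₀ f)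
    (hτinv : Function.Involutive τ)
    (hτ : (∀ x y, τ (x * y) = τ x * τ y) ∨ (∀ x y, τ (x * y) = τ y * τ x))
    (hμ : ∀ x y, μ (x * y) = μ x * μ y) (hμτ : ∀ x, μ x * μ (τ x) = 1)
    (hz₀ : z₀ ∈ Set.center S) (hfz₀ : f z₀ ≠ 0) (x : S) : μ x * f (τ x * z₀) = f (x * z₀) := by
  have hV := hf.apply_mul_apply_mul_of_mem_center hτinv hτ hμ hz₀ z₀ x
  rw [hf.apply_mul_self_eq_zero hτinv hτ hμ hμτ hz₀ hfz₀, zero_mul, zero_add] at hV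
  exact (mul_left_cancel₀ hfz₀ (by linear_combination hV)).symm

end IsVanVleckSolution

end

theorem stmt_17 {S : Type*} [Semigroup S] (τ : S → S)
    (hτinv : ∀ x, τ (τ x) = x)
    (hτ : (∀ x y, τ (x * y) = τ x * τ y) ∨ (∀ x y, τ (x * y) = τ y * τ x))
    (μ : S → ℂ) (hμ : ∀ x y, μ (x * y) = μ x * μ y)
    (hμτ : ∀ x, μ (x * τ x) = 1)
    (z₀ : S) (hz₀ : ∀ x, z₀ * x = x * z₀)
    (f : S → ℂ) (hf0 : f ≠ 0) (hf : ∀ x y, μ y * f (τ y * x * z₀) - f (x * y * z₀) = 2 * f x * f y) :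
    (∀ x, f x = -(μ x * f (τ x))) ∧
    (∀ x y, μ y * f (τ y * x) = -(μ x * f (τ x * y))) ∧
    (∀ x, f (x * τ z₀ * z₀) = μ (τ z₀) * f z₀ * f x) ∧
    (∀ x, f (x * (z₀ * z₀)) = -(f z₀ * f x)) ∧
    (∀ x, μ x * f (τ x * z₀) = f (x * z₀)) ∧
    f (z₀ * z₀) = 0 ∧ f (z₀ * τ z₀) = 0 := by
  have hf : IsVanVleckSolution τ μ z₀ f := hf
  have hμτ' : ∀ x, μ x * μ (τ x) = 1 := fun x => hμ x (τ x) ▸ hμτ x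
  have hz : z₀ ∈ Set.center S := Semigroup.mem_center_iff.mpr fun x => (hz₀ x).symm
  have hfz₀ := hf.apply_ne_zero hτinv hτ hμ hμτ' hz hf0
  refine ⟨hf.odd hτinv hμτ', hf.mul_apply_map_mul_eq_neg hτinv hτ hμ hz hfz₀,
    hf.apply_mul_map_mul hτinv hτ hμ hμτ' hz hfz₀,
    hf.apply_mul_mul_self hτinv hτ hμ hμτ' hz hfz₀,
    hf.mul_apply_map_mul_eq_apply_mul hτinv hτ hμ hμτ' hz hfz₀,
    hf.apply_mul_self_eq_zero hτinv hτ hμ hμτ' hz hfz₀, ?_⟩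
  rw [← Semigroup.mem_center_iff.mp hz]
  exact hf.apply_map_mul_self_eq_zero hτinv hτ hμ hμτ' hz hfz₀
end

section
/- If f: S → ℂ is a nonzero solution of μ(y)f(τ(y)xz₀) − f(xyz₀) = 2f(x)f(y), then g(x) := f(xz₀)/f(z₀) is a nonzero solution of the variant d'Alembert equation g(xy) + μ(y)g(τ(y)x) = 2g(x)g(y), and the pair (f,g) satisfies the sine addition law f(xy) = f(x)g(y) + f(y)g(x) for all x,y ∈ S. -/
/-!
Put `c = f z₀`. The equation at `(x z₀, y)`, `(x, y z₀)` and `(τ(y) x, z₀)` combines into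
`c μ(y) f(τ(y) x) = f(x) f(y z₀) - f(x z₀) f(y)`.
If `c = 0` this makes `f` proportional to `x ↦ f(x z₀)`, and a multiple of `f` then solves
the reduced equation `μ(y) h(τ(y) x) - h(x y) = 2 h(x) h(y)`, with `z₀` deleted. That equation
has only the zero solution: a nonzero solution satisfies `h(x x) = -2 h(x)²`, hence
`h(τ x) = -μ(τ x) h(x)`, and these force `h(x)² = 0`.
With `c ≠ 0`, evaluating the identity at points built from `z₀` gives `f(z₀²) = 0`,
`f(x z₀²) = -c f(x)`, `μ(y) f(τ y) = -f(y)` and `μ(y) f(τ(y) z₀) = f(y z₀)`. Substituting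
these back yields `c f(y x) = f(x) f(y z₀) + f(x z₀) f(y)`, the sine addition law, and
`c f(x y z₀) = f(x z₀) f(y z₀) - c f(x) f(y)`, which with the original equation is
d'Alembert's equation for `g`.
-/

section Involution

variable {S : Type*} [Semigroup S] {τ : S → S}

theorem map_mul_comm_of_mul_comm (hτinv : Function.Involutive τ)
    (hτ : (∀ x y, τ (x * y) = τ x * τ y) ∨ (∀ x y, τ (x * y) = τ y * τ x))
    {z : S} (hz : ∀ x, z * x = x * z) (x : S) : τ z * x = x * τ z := by
  obtain ⟨y, rfl⟩ := hτinv.surjective x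
  rcases hτ with hhom | hanti
  · rw [← hhom, hz, hhom]
  · rw [← hanti, ← hz, hanti]

theorem map_mul_of_mul_comm
    (hτ : (∀ x y, τ (x * y) = τ x * τ y) ∨ (∀ x y, τ (x * y) = τ y * τ x))
    {z : S} (hz : ∀ x, τ z * x = x * τ z) (y : S) : τ (y * z) = τ y * τ z := by
  rcases hτ with hhom | hanti
  · exact hhom y z
  · rw [hanti, hz]

end Involution

section Reduced

variable {S : Type*} [Semigroup S] {τ : S → S} {μ : S → ℂ} {h : S → ℂ}

theorem reduced_comm_identity_of_hom (hhom : ∀ x y, τ (x * y) = τ x * τ y)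
    (hμ : ∀ x y, μ (x * y) = μ x * μ y)
    (hA : ∀ x y, μ y * h (τ y * x) - h (x * y) = 2 * h x * h y) (x y z : S) :
    h x * (h (y * z) + h (z * y)) =
      2 * h (x * y) * h z + 2 * h (x * z) * h y + 4 * h x * h y * h z := by
  have hC : ∀ y z, h x * h (y * z) =
      h (x * y) * h z + h (x * z) * h y + 2 * h x * h y * h z := by
    intro y z
    have e1 := hA x (y * z)
    rw [hhom y z, mul_assoc (τ y) (τ z) x, hμ y z, ← mul_assoc x y z] at e1
    have e2 := hA (τ z * x) y
    rw [mul_assoc (τ z) x y] at e2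
    linear_combination (μ z * e2 + hA (x * y) z + 2 * h y * hA x z - e1) / 2
  linear_combination hC y z + hC z y

theorem reduced_comm_identity_of_anti (hanti : ∀ x y, τ (x * y) = τ y * τ x)
    (hμ : ∀ x y, μ (x * y) = μ x * μ y)
    (hA : ∀ x y, μ y * h (τ y * x) - h (x * y) = 2 * h x * h y) (x y z : S) :
    h x * (h (y * z) + h (z * y)) =
      2 * h (x * y) * h z + 2 * h (x * z) * h y + 4 * h x * h y * h z := by
  have hC : ∀ y z, h (x * y * z) + 2 * h x * h (y * z) =
      h (x * z * y) + 2 * h (x * z) * h y + 2 * h (x * y) * h z + 4 * h x * h y * h z := by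
    intro y z
    have e1 := hA x (y * z)
    rw [hanti y z, mul_assoc (τ z) (τ y) x, hμ y z, ← mul_assoc x y z] at e1
    have e2 := hA (τ y * x) z
    rw [mul_assoc (τ y) x z] at e2
    linear_combination μ y * e2 + hA (x * z) y + 2 * h z * hA x y - e1
  linear_combination (hC y z + hC z y) / 2

theorem apply_mul_self_of_comm_identity
    (hC : ∀ x y z, h x * (h (y * z) + h (z * y)) =
      2 * h (x * y) * h z + 2 * h (x * z) * h y + 4 * h x * h y * h z)
    {a : S} (ha : h a ≠ 0) (x : S) : h (x * x) = -2 * (h x * h x) := by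
  have hδ : ∀ y z, h z * h z * (h (y * y) + 2 * (h y * h y))
      + h y * h y * (h (z * z) + 2 * (h z * h z)) = 0 := fun y z => by
    linear_combination (-(h z * hC y y z + h y * hC z y z)) / 2
  have ha2 : h a * h a ≠ 0 := mul_self_ne_zero.mpr ha
  have hδa : h (a * a) = -2 * (h a * h a) :=
    mul_left_cancel₀ ha2 (by linear_combination hδ a a / 2)
  exact mul_left_cancel₀ ha2 (by linear_combination hδ x a - h x * h x * hδa)

theorem apply_map_of_apply_mul_self (hτinv : Function.Involutive τ)
    (hμ1 : ∀ x, μ x * μ (τ x) = 1)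
    (hA : ∀ x y, μ y * h (τ y * x) - h (x * y) = 2 * h x * h y)
    (hsq : ∀ x, h (x * x) = -2 * (h x * h x)) (x : S) : h (τ x) = -(μ (τ x) * h x) := by
  have hτx : ∀ x, h (τ x * x) = 0 := fun x =>
    mul_left_cancel₀ (left_ne_zero_of_mul_eq_one (hμ1 x)) (by linear_combination hA x x + hsq x)
  have e1 := hA (τ x) x
  have e2 := hA x (τ x)
  rw [hτinv] at e2
  have e3 := hτx (τ x)
  rw [hτinv] at e3
  rw [hsq, hτx] at e1
  rw [hsq, e3] at e2
  linear_combination (exp := 2) -(μ (τ x) / 2) * (e1 + e2) - h (τ x) ^ 2 * hμ1 x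

theorem reduced_eq_zero_of_hom (hτinv : Function.Involutive τ)
    (hhom : ∀ x y, τ (x * y) = τ x * τ y) (hμ : ∀ x y, μ (x * y) = μ x * μ y)
    (hμ1 : ∀ x, μ x * μ (τ x) = 1)
    (hA : ∀ x y, μ y * h (τ y * x) - h (x * y) = 2 * h x * h y)
    (hT : ∀ x, h (τ x) = -(μ (τ x) * h x)) (x : S) : h x = 0 := by
  -- the equation at `(τ x, τ x)`, transported back by `τ`, is the one at `(x, x)`
  -- with the sign of `2 h(x)²` reversed
  have e := hA (τ x) (τ x)
  have h1 := hT (τ x * x)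
  rw [hhom, hτinv, hμ, hμ1] at h1
  have h2 := hT (x * x)
  rw [hhom, hμ] at h2
  rw [hτinv, h1, h2, hT x] at e
  linear_combination (exp := 2) (-(μ x ^ 2 * e + hA x x) + (-(μ x) * h (τ x * x)
    + (1 + μ x * μ (τ x)) * (h (x * x) - 2 * h x ^ 2)) * hμ1 x) / 4

theorem apply_mul_of_anti (hτinv : Function.Involutive τ)
    (hanti : ∀ x y, τ (x * y) = τ y * τ x) (hμ : ∀ x y, μ (x * y) = μ x * μ y)
    (hμ1 : ∀ x, μ x * μ (τ x) = 1)
    (hA : ∀ x y, μ y * h (τ y * x) - h (x * y) = 2 * h x * h y)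
    (hC : ∀ x y z, h x * (h (y * z) + h (z * y)) =
      2 * h (x * y) * h z + 2 * h (x * z) * h y + 4 * h x * h y * h z)
    (hT : ∀ x, h (τ x) = -(μ (τ x) * h x)) {a : S} (ha : h a ≠ 0) (x y : S) :
    h (x * y) = -2 * h x * h y := by
  have hswap : ∀ x y, μ y * h (τ y * x) = -(μ x * h (τ x * y)) := fun x y => by
    have t := hT (τ x * y)
    rw [hanti, hτinv, hμ] at t
    linear_combination μ y * t - μ x * h (τ x * y) * hμ1 y
  have hK1 : ∀ x y, h (x * y) + h (y * x) = -4 * h x * h y := fun x y => by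
    linear_combination hswap x y - hA x y - hA y x
  have hK2 : ∀ x y z, h (x * z) * h y + h (x * y) * h z = -4 * h x * h y * h z :=
    fun x y z => by linear_combination (h x * hK1 y z - hC x y z) / 2
  have hxa : ∀ x, h (x * a) = -2 * h x * h a := fun x =>
    mul_right_cancel₀ ha (by linear_combination hK2 x a a / 2)
  exact mul_right_cancel₀ ha (by linear_combination hK2 x a y - h y * hxa x)

theorem eq_zero_of_apply_mul (hμ1 : ∀ x, μ x * μ (τ x) = 1)
    (hA : ∀ x y, μ y * h (τ y * x) - h (x * y) = 2 * h x * h y)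
    (hT : ∀ x, h (τ x) = -(μ (τ x) * h x)) (hmul : ∀ x y, h (x * y) = -2 * h x * h y)
    (x : S) : h x = 0 := by
  have e := hA x x
  rw [hmul (τ x) x, hmul x x, hT x] at e
  linear_combination (exp := 2) e / 2 - h x * h x * hμ1 x

theorem reduced_eq_zero (hτinv : Function.Involutive τ)
    (hτ : (∀ x y, τ (x * y) = τ x * τ y) ∨ (∀ x y, τ (x * y) = τ y * τ x))
    (hμ : ∀ x y, μ (x * y) = μ x * μ y) (hμ1 : ∀ x, μ x * μ (τ x) = 1)
    (hA : ∀ x y, μ y * h (τ y * x) - h (x * y) = 2 * h x * h y) : h = 0 := by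
  by_contra hne
  obtain ⟨a, ha⟩ := Function.ne_iff.mp hne
  have hC := hτ.elim (reduced_comm_identity_of_hom · hμ hA) (reduced_comm_identity_of_anti · hμ hA)
  have hT := apply_map_of_apply_mul_self hτinv hμ1 hA (apply_mul_self_of_comm_identity hC ha)
  refine ha ?_
  rcases hτ with hhom | hanti
  · exact reduced_eq_zero_of_hom hτinv hhom hμ hμ1 hA hT a
  · exact eq_zero_of_apply_mul hμ1 hA hT (apply_mul_of_anti hτinv hanti hμ hμ1 hA hC hT ha) a

end Reduced

section VanVleck

variable {S : Type*} [Semigroup S] {τ : S → S} {μ : S → ℂ} {z₀ : S} {f : S → ℂ}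

theorem exists_apply_mul_ne_zero
    (hf : ∀ x y, μ y * f (τ y * x * z₀) - f (x * y * z₀) = 2 * f x * f y) (hf0 : f ≠ 0) :
    ∃ x, f (x * z₀) ≠ 0 := by
  by_contra! h
  refine hf0 (funext fun a => ?_)
  have e := hf a a
  rw [h, h] at e
  simpa using e

theorem apply_center_mul_apply_map_mul (hz₀ : ∀ x, z₀ * x = x * z₀)
    (hτz₀ : ∀ x, τ z₀ * x = x * τ z₀) (hτmul : ∀ y, τ (y * z₀) = τ y * τ z₀)
    (hμ : ∀ x y, μ (x * y) = μ x * μ y)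
    (hf : ∀ x y, μ y * f (τ y * x * z₀) - f (x * y * z₀) = 2 * f x * f y) (x y : S) :
    f z₀ * (μ y * f (τ y * x)) = f x * f (y * z₀) - f (x * z₀) * f y := by
  have e1 := hf (x * z₀) y
  rw [show τ y * (x * z₀) * z₀ = τ y * x * z₀ * z₀ by simp only [mul_assoc],
    show x * z₀ * y * z₀ = x * y * z₀ * z₀ by rw [mul_assoc x z₀ y, hz₀ y, ← mul_assoc]] at e1
  have e2 := hf x (y * z₀)
  rw [hμ, hτmul, show τ y * τ z₀ * x * z₀ = τ z₀ * (τ y * x) * z₀ by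
      rw [← hτz₀, mul_assoc (τ z₀)],
    show x * (y * z₀) * z₀ = x * y * z₀ * z₀ by rw [← mul_assoc x y z₀]] at e2
  linear_combination (e2 - e1 - μ y * hf (τ y * x) z₀) / 2

theorem apply_center_ne_zero (hτinv : Function.Involutive τ)
    (hτ : (∀ x y, τ (x * y) = τ x * τ y) ∨ (∀ x y, τ (x * y) = τ y * τ x))
    (hμ : ∀ x y, μ (x * y) = μ x * μ y) (hμ1 : ∀ x, μ x * μ (τ x) = 1)
    (hf : ∀ x y, μ y * f (τ y * x * z₀) - f (x * y * z₀) = 2 * f x * f y) (hf0 : f ≠ 0)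
    (hkey : ∀ x y, f z₀ * (μ y * f (τ y * x)) = f x * f (y * z₀) - f (x * z₀) * f y) :
    f z₀ ≠ 0 := by
  intro hc
  obtain ⟨a, haz⟩ := exists_apply_mul_ne_zero hf hf0
  have hprop : ∀ u, f a * f (u * z₀) = f (a * z₀) * f u := fun u => by
    linear_combination μ u * f (τ u * a) * hc - hkey a u
  have ha : f a ≠ 0 := fun ha => hf0 <| funext fun u => by
    simpa [ha, haz] using hprop u
  have hsol := reduced_eq_zero (h := fun x => f a * f x / f (a * z₀)) hτinv hτ hμ hμ1
    fun x y => by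
      field_simp
      linear_combination f a * hf x y - μ y * hprop (τ y * x) + hprop (x * y)
  have := congrFun hsol a
  simp [ha, haz] at this

theorem two_mul_apply_mul_center_mul_center
    (hf : ∀ x y, μ y * f (τ y * x * z₀) - f (x * y * z₀) = 2 * f x * f y)
    (hkey : ∀ x y, f z₀ * (μ y * f (τ y * x)) = f x * f (y * z₀) - f (x * z₀) * f y) (x : S) :
    2 * f z₀ * f (x * z₀ * z₀) = f (z₀ * z₀) * f (x * z₀) - 2 * f z₀ * f z₀ * f x := by
  have e := hkey (x * z₀) z₀
  rw [← mul_assoc (τ z₀) x z₀] at e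
  linear_combination e - f z₀ * hf x z₀

theorem apply_center_mul_center_eq_zero (hτinv : Function.Involutive τ)
    (hz₀ : ∀ x, z₀ * x = x * z₀) (hτz₀ : ∀ x, τ z₀ * x = x * τ z₀)
    (hμ1 : ∀ x, μ x * μ (τ x) = 1)
    (hf : ∀ x y, μ y * f (τ y * x * z₀) - f (x * y * z₀) = 2 * f x * f y) (hf0 : f ≠ 0)
    (hkey : ∀ x y, f z₀ * (μ y * f (τ y * x)) = f x * f (y * z₀) - f (x * z₀) * f y)
    (hfz : f z₀ ≠ 0) : f (z₀ * z₀) = 0 := by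
  have hsq := two_mul_apply_mul_center_mul_center hf hkey
  have hμτ : μ (τ z₀) ≠ 0 := right_ne_zero_of_mul_eq_one (hμ1 z₀)
  have h1 : f (τ z₀ * z₀) = 0 :=
    mul_left_cancel₀ (mul_ne_zero hfz (left_ne_zero_of_mul_eq_one (hμ1 z₀)))
      (by linear_combination hkey z₀ z₀)
  have h2 : f (τ z₀) = -(μ (τ z₀) * f z₀) := by
    obtain ⟨x, hx⟩ := exists_apply_mul_ne_zero hf hf0
    have e := hkey x (τ z₀)
    rw [hτinv, hz₀, h1] at e
    exact mul_left_cancel₀ hx (by linear_combination e)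
  have h3 : f (τ z₀ * z₀ * z₀) = μ (τ z₀) * (f z₀ * f z₀) := by
    have e := hsq (τ z₀)
    rw [h1, h2] at e
    exact mul_left_cancel₀ hfz (by linear_combination e / 2)
  have h4 : f (z₀ * z₀ * z₀) = -(f z₀ * f z₀) := by
    have e := hf z₀ (τ z₀)
    rw [hτinv, ← hτz₀, h3, h2] at e
    exact mul_left_cancel₀ hμτ (by linear_combination e)
  have e := hsq z₀
  rw [h4] at e
  exact pow_eq_zero_iff two_ne_zero |>.mp (by linear_combination -e)

theorem apply_mul_center_mul_center
    (hf : ∀ x y, μ y * f (τ y * x * z₀) - f (x * y * z₀) = 2 * f x * f y)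
    (hkey : ∀ x y, f z₀ * (μ y * f (τ y * x)) = f x * f (y * z₀) - f (x * z₀) * f y)
    (hfz : f z₀ ≠ 0) (hz₀z₀ : f (z₀ * z₀) = 0) (x : S) :
    f (x * z₀ * z₀) = -(f z₀ * f x) := by
  have e := two_mul_apply_mul_center_mul_center hf hkey x
  rw [hz₀z₀] at e
  exact mul_left_cancel₀ hfz (by linear_combination e / 2)

theorem mul_apply_map (hz₀ : ∀ x, z₀ * x = x * z₀)
    (hf : ∀ x y, μ y * f (τ y * x * z₀) - f (x * y * z₀) = 2 * f x * f y)
    (hfz : f z₀ ≠ 0) (hsq : ∀ x, f (x * z₀ * z₀) = -(f z₀ * f x)) (y : S) :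
    μ y * f (τ y) = -f y := by
  have e := hf z₀ y
  rw [hsq, hz₀, hsq] at e
  exact mul_left_cancel₀ hfz (by linear_combination -e)

theorem mul_apply_map_mul_center
    (hkey : ∀ x y, f z₀ * (μ y * f (τ y * x)) = f x * f (y * z₀) - f (x * z₀) * f y)
    (hfz : f z₀ ≠ 0) (hz₀z₀ : f (z₀ * z₀) = 0) (y : S) :
    μ y * f (τ y * z₀) = f (y * z₀) := by
  have e := hkey z₀ y
  rw [hz₀z₀] at e
  exact mul_left_cancel₀ hfz (by linear_combination e)

theorem apply_center_mul_apply_mul (hτinv : Function.Involutive τ)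
    (hμ1 : ∀ x, μ x * μ (τ x) = 1)
    (hkey : ∀ x y, f z₀ * (μ y * f (τ y * x)) = f x * f (y * z₀) - f (x * z₀) * f y)
    (hmap : ∀ y, μ y * f (τ y) = -f y) (hmapz : ∀ y, μ y * f (τ y * z₀) = f (y * z₀))
    (x y : S) : f z₀ * f (y * x) = f x * f (y * z₀) + f (x * z₀) * f y := by
  have e := hkey x (τ y)
  rw [hτinv] at e
  linear_combination μ y * e + f x * hmapz y - f (x * z₀) * hmap y - f z₀ * f (y * x) * hμ1 y

theorem apply_center_mul_apply_mul_mul_center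
    (hf : ∀ x y, μ y * f (τ y * x * z₀) - f (x * y * z₀) = 2 * f x * f y)
    (hkey : ∀ x y, f z₀ * (μ y * f (τ y * x)) = f x * f (y * z₀) - f (x * z₀) * f y)
    (hsq : ∀ x, f (x * z₀ * z₀) = -(f z₀ * f x)) (x y : S) :
    f z₀ * f (x * y * z₀) = f (x * z₀) * f (y * z₀) - f z₀ * f x * f y := by
  have e := hkey (x * z₀) y
  rw [← mul_assoc (τ y) x z₀] at e
  linear_combination e - f z₀ * hf x y - f y * hsq x

end VanVleck

theorem stmt_18 {S : Type*} [Semigroup S] (τ : S → S)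
    (hτinv : ∀ x, τ (τ x) = x)
    (hτ : (∀ x y, τ (x * y) = τ x * τ y) ∨ (∀ x y, τ (x * y) = τ y * τ x))
    (μ : S → ℂ) (hμ : ∀ x y, μ (x * y) = μ x * μ y)
    (hμτ : ∀ x, μ (x * τ x) = 1)
    (z₀ : S) (hz₀ : ∀ x, z₀ * x = x * z₀)
    (f : S → ℂ) (hf0 : f ≠ 0) (hf : ∀ x y, μ y * f (τ y * x * z₀) - f (x * y * z₀) = 2 * f x * f y) :
    (fun x => f (x * z₀) / f z₀) ≠ 0 ∧
    (∀ x y, (fun x => f (x * z₀) / f z₀) (x * y) + μ y * (fun x => f (x * z₀) / f z₀) (τ y * x) =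
      2 * (fun x => f (x * z₀) / f z₀) x * (fun x => f (x * z₀) / f z₀) y) ∧
    (∀ x y, f (x * y) = f x * (fun x => f (x * z₀) / f z₀) y +
      f y * (fun x => f (x * z₀) / f z₀) x) := by
  have hμ1 : ∀ x, μ x * μ (τ x) = 1 := fun x => by rw [← hμ, hμτ]
  have hτz₀ := map_mul_comm_of_mul_comm hτinv hτ hz₀
  have hkey := apply_center_mul_apply_map_mul hz₀ hτz₀ (map_mul_of_mul_comm hτ hτz₀) hμ hf
  have hfz := apply_center_ne_zero hτinv hτ hμ hμ1 hf hf0 hkey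
  have hz₀z₀ := apply_center_mul_center_eq_zero hτinv hz₀ hτz₀ hμ1 hf hf0 hkey hfz
  have hsq := apply_mul_center_mul_center hf hkey hfz hz₀z₀
  have hG := apply_center_mul_apply_mul_mul_center hf hkey hsq
  refine ⟨fun hg => ?_, fun x y => ?_, fun x y => ?_⟩
  · obtain ⟨a, ha⟩ := exists_apply_mul_ne_zero hf hf0
    exact ha (by simpa [hfz] using congrFun hg a)
  · field_simp
    linear_combination f z₀ * hf x y + 2 * hG x y
  · field_simp
    linear_combination apply_center_mul_apply_mul hτinv hμ1 hkey
      (mul_apply_map hz₀ hf hfz hsq) (mul_apply_map_mul_center hkey hfz hz₀z₀) y x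
end
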